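/- arXiv:1309.2085 — 7 statements merged into one kernel-verified Lean document; each statement's English description precedes it below -/
import Mathlib

section
/- For every n ≥ 1 and every field F, the Dynkin–Specht–Wever element satisfies ω_n² = n·ω_n in the group algebra F𝔖_n. -/
/-!
Extend `σ ↦ x_{σ 1} ⋯ x_{σ n}` linearly to an injective map from `F𝔖_n` to the free algebra
on `x_1, …, x_n`. Right multiplication by `c_{m+1}` moves the `(m+1)`-st letter of each word
to the front, so right multiplication by `1 - c_{m+1}` turns
`[⋯[x_{i₁}, x_{i₂}], …, x_{iₘ}] x_{iₘ₊₁} ⋯ x_{iₙ}` into `[⋯[x_{i₁}, x_{i₂}], …, x_{iₘ₊₁}] ⋯ x_{iₙ}`.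
Hence right multiplication by `ω_n` becomes the Dynkin operator `D`, which replaces every word
by its left-normed bracket. For `a` without constant term and `P` a Lie polynomial,
`D (a P) = [D a, P]`; so `D` multiplies a left-normed bracket of length `k` by `k`, and
`D (D w) = n D w` for `w = x_1 ⋯ x_n`, which is `ω_n² = n ω_n`.
-/

/-- The partial Dynkin–Specht–Wever element `(1-c_2)(1-c_3)⋯(1-c_m)` inside `F𝔖_n`,
where `c_k` is the backward cycle `(k, k-1, …, 2, 1)` of `𝔖_n` (in zero-based indexing,
`c_k` is the inverse of `Fin.cycleRange (k-1)`). -/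
noncomputable def dswPartial (F : Type*) [Field F] (n m : ℕ) :
    MonoidAlgebra F (Equiv.Perm (Fin n)) :=
  (((List.finRange n).take m).tail.map
    (fun j => (1 : MonoidAlgebra F (Equiv.Perm (Fin n))) -
      MonoidAlgebra.of F (Equiv.Perm (Fin n)) (Fin.cycleRange j)⁻¹)).prod

/-- The Dynkin–Specht–Wever element `ω_n = (1-c_2)(1-c_3)⋯(1-c_n) ∈ F𝔖_n`; `ω_1 = 1`. -/
noncomputable def dsw (F : Type*) [Field F] (n : ℕ) :
    MonoidAlgebra F (Equiv.Perm (Fin n)) :=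
  dswPartial F n n

open Equiv
open MonoidAlgebra (of lift basis basis_apply mapDomainLinearMap mapDomain_injective)

namespace List

variable {α : Type*}

def moveToFront (i : ℕ) (l : List α) : List α := l[i]?.toList ++ l.eraseIdx i

lemma moveToFront_append_cons (u r : List α) (x : α) :
    moveToFront u.length (u ++ x :: r) = x :: (u ++ r) := by
  simp [moveToFront, eraseIdx_append_of_length_le]

lemma ofFn_removeNth {n : ℕ} (f : Fin (n + 1) → α) (j : Fin (n + 1)) :
    ofFn (j.removeNth f) = (ofFn f).eraseIdx j := by
  refine ext_getElem (by simp [length_eraseIdx, j.is_le]) fun i _ _ => ?_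
  simp only [List.getElem_ofFn, getElem_eraseIdx, Fin.removeNth_apply, Fin.succAbove]
  split_ifs <;> simp_all [Fin.lt_def]

lemma ofFn_mul_cycleRange_inv : ∀ {n : ℕ} (σ : Equiv.Perm (Fin n)) (j : Fin n),
    ofFn ⇑(σ * j.cycleRange⁻¹) = moveToFront j (ofFn σ)
  | 0, _, j => j.elim0
  | n + 1, σ, j => by
    rw [Perm.coe_mul, Perm.coe_inv, ← Fin.cons_removeNth_eq_comp_cycleRange_symm, ofFn_cons,
      ofFn_removeNth, moveToFront, List.getElem?_ofFn]
    simp [j.is_le]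

end List

noncomputable section

namespace DynkinSpechtWever

attribute [local instance] LieRing.ofAssociativeRing

section FreeAlgebra

variable {R α : Type*} [CommRing R]

local notation "𝔸" => MonoidAlgebra R (FreeMonoid α)

def word (l : List α) : 𝔸 := of R (FreeMonoid α) (FreeMonoid.ofList l)

lemma word_append (l₁ l₂ : List α) : (word (l₁ ++ l₂) : 𝔸) = word l₁ * word l₂ := by
  rw [word, FreeMonoid.ofList_append, map_mul]; rfl

lemma word_cons (x : α) (l : List α) : (word (x :: l) : 𝔸) = word [x] * word l :=
  word_append [x] l

lemma word_nil : (word [] : 𝔸) = 1 := map_one _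

lemma of_eq_word (w : FreeMonoid α) : of R (FreeMonoid α) w = word w.toList := by
  rw [word, FreeMonoid.ofList_toList]

variable (R α) in
def letters : Set 𝔸 := Set.range fun x => word [x]

lemma word_singleton_mem_lieSpan (x : α) :
    (word [x] : 𝔸) ∈ LieSubalgebra.lieSpan R 𝔸 (letters R α) :=
  LieSubalgebra.subset_lieSpan ⟨x, rfl⟩

def lieWord : List α → 𝔸
  | [] => 0
  | x :: l => l.foldl (fun a y => ⁅a, word [y]⁆) (word [x])

@[simp] lemma lieWord_singleton (x : α) : (lieWord [x] : 𝔸) = word [x] := rfl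

lemma lieWord_append_singleton {l : List α} (hl : l ≠ []) (x : α) :
    (lieWord (l ++ [x]) : 𝔸) = ⁅(lieWord l : 𝔸), word [x]⁆ := by
  obtain ⟨y, l, rfl⟩ := List.exists_cons_of_ne_nil hl
  simp [lieWord, List.foldl_append]

lemma lieWord_mem_lieSpan (l : List α) :
    (lieWord l : 𝔸) ∈ LieSubalgebra.lieSpan R 𝔸 (letters R α) := by
  induction l using List.reverseRecOn with
  | nil => exact zero_mem _
  | append_singleton l x ih =>
    rcases eq_or_ne l [] with rfl | hl
    · exact word_singleton_mem_lieSpan x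
    · rw [lieWord_append_singleton hl]
      exact LieSubalgebra.lie_mem _ ih (word_singleton_mem_lieSpan x)

variable (R α) in
def constantCoeff : 𝔸 →ₐ[R] R := lift R R (FreeMonoid α) (FreeMonoid.lift fun _ => 0)

lemma constantCoeff_word (l : List α) :
    constantCoeff R α (word l) = if l = [] then 1 else 0 := by
  cases l <;> simp [constantCoeff, word]

lemma constantCoeff_lie (a b : 𝔸) : constantCoeff R α ⁅a, b⁆ = 0 := by
  rw [Ring.lie_def, map_sub, map_mul, map_mul, mul_comm, sub_self]

lemma constantCoeff_lieWord (l : List α) : constantCoeff R α (lieWord l) = 0 := by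
  induction l using List.reverseRecOn with
  | nil => exact map_zero _
  | append_singleton l x ih =>
    rcases eq_or_ne l [] with rfl | hl
    · simp [constantCoeff_word]
    · rw [lieWord_append_singleton hl, constantCoeff_lie]

variable (R α) in
def dynkin : 𝔸 →ₗ[R] 𝔸 := (basis (FreeMonoid α) R).constr R fun w => lieWord w.toList

@[simp] lemma dynkin_word (l : List α) : dynkin R α (word l) = lieWord l := by
  simp [dynkin, word, ← basis_apply]

lemma dynkin_mul_word_singleton (a : 𝔸) (x : α) :
    dynkin R α (a * word [x]) = ⁅dynkin R α a, word [x]⁆ + constantCoeff R α a • word [x] := by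
  induction a using MonoidAlgebra.induction_on with
  | of w =>
    rw [of_eq_word, ← word_append, dynkin_word, dynkin_word, constantCoeff_word]
    rcases eq_or_ne w.toList [] with h | h
    · simp [h, lieWord]
    · simp [h, lieWord_append_singleton h]
  | add a b ha hb => simp only [add_mul, map_add, ha, hb, add_lie, add_smul]; abel
  | smul c a ha =>
    simp only [smul_mul_assoc, map_smul, ha, smul_lie, smul_add, smul_eq_mul, mul_smul]

lemma dynkin_mul_of_mem_lieSpan {P : 𝔸} (hP : P ∈ LieSubalgebra.lieSpan R 𝔸 (letters R α))
    {a : 𝔸} (ha : constantCoeff R α a = 0) : dynkin R α (a * P) = ⁅dynkin R α a, P⁆ := by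
  induction hP using LieSubalgebra.lieSpan_induction generalizing a with
  | mem P hP =>
    obtain ⟨x, rfl⟩ := hP
    rw [dynkin_mul_word_singleton, ha, zero_smul, add_zero]
  | zero => simp
  | add P Q _ _ hP hQ => rw [mul_add, map_add, hP ha, hQ ha, lie_add]
  | smul c P _ hP => rw [mul_smul_comm, map_smul, hP ha, lie_smul]
  | lie P Q _ _ hP hQ =>
    have haP : constantCoeff R α (a * P) = 0 := by rw [map_mul, ha, zero_mul]
    have haQ : constantCoeff R α (a * Q) = 0 := by rw [map_mul, ha, zero_mul]
    calc dynkin R α (a * ⁅P, Q⁆) = dynkin R α ((a * P) * Q) - dynkin R α ((a * Q) * P) := by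
          rw [Ring.lie_def, mul_sub, map_sub, mul_assoc, mul_assoc]
      _ = ⁅⁅dynkin R α a, P⁆, Q⁆ - ⁅⁅dynkin R α a, Q⁆, P⁆ := by
          rw [hQ haP, hP haQ, hP ha, hQ ha]
      _ = ⁅dynkin R α a, ⁅P, Q⁆⁆ := by rw [leibniz_lie, ← lie_skew P, sub_eq_add_neg]

theorem dynkin_lieWord (l : List α) :
    dynkin R α (lieWord l) = (l.length : R) • (lieWord l : 𝔸) := by
  induction l using List.reverseRecOn with
  | nil => simp [lieWord]
  | append_singleton l x ih =>
    rcases eq_or_ne l [] with rfl | hl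
    · simp
    calc dynkin R α (lieWord (l ++ [x]))
        = dynkin R α (lieWord l * word [x]) - dynkin R α (word [x] * lieWord l) := by
          rw [lieWord_append_singleton hl, Ring.lie_def, map_sub]
      _ = ⁅(l.length : R) • (lieWord l : 𝔸), word [x]⁆ - ⁅(word [x] : 𝔸), lieWord l⁆ := by
          rw [dynkin_mul_of_mem_lieSpan (word_singleton_mem_lieSpan x) (constantCoeff_lieWord l),
            dynkin_mul_of_mem_lieSpan (lieWord_mem_lieSpan l) (by simp [constantCoeff_word]),
            ih, dynkin_word, lieWord_singleton]
      _ = ((l ++ [x]).length : R) • lieWord (l ++ [x]) := by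
          rw [lieWord_append_singleton hl, smul_lie, ← lie_skew, List.length_append,
            List.length_singleton, Nat.cast_succ, add_smul, one_smul, sub_eq_add_neg]

variable (R α) in
def homogeneous (m : ℕ) : Submodule R 𝔸 := Submodule.span R (word '' {l | l.length = m})

lemma word_mem_homogeneous (l : List α) : (word l : 𝔸) ∈ homogeneous R α l.length :=
  Submodule.subset_span ⟨l, rfl, rfl⟩

lemma mul_mem_homogeneous {i j : ℕ} {a b : 𝔸} (ha : a ∈ homogeneous R α i)
    (hb : b ∈ homogeneous R α j) : a * b ∈ homogeneous R α (i + j) := by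
  have hab := Submodule.mul_mem_mul ha hb
  rw [homogeneous, homogeneous, Submodule.span_mul_span] at hab
  refine Submodule.span_mono ?_ hab
  rintro _ ⟨_, ⟨u, rfl, rfl⟩, _, ⟨v, rfl, rfl⟩, rfl⟩
  exact ⟨u ++ v, List.length_append, word_append u v⟩

lemma lieWord_mem_homogeneous (l : List α) : (lieWord l : 𝔸) ∈ homogeneous R α l.length := by
  induction l using List.reverseRecOn with
  | nil => exact zero_mem _
  | append_singleton l x ih =>
    rcases eq_or_ne l [] with rfl | hl
    · exact word_mem_homogeneous [x]
    have hx := word_mem_homogeneous (R := R) [x]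
    rw [lieWord_append_singleton hl, Ring.lie_def, List.length_append]
    exact sub_mem (mul_mem_homogeneous ih hx) (add_comm l.length _ ▸ mul_mem_homogeneous hx ih)

variable (R α) in
def moveToFrontMap (i : ℕ) : 𝔸 →ₗ[R] 𝔸 :=
  mapDomainLinearMap R R fun w => FreeMonoid.ofList (w.toList.moveToFront i)

lemma moveToFrontMap_word (i : ℕ) (l : List α) :
    moveToFrontMap R α i (word l) = word (l.moveToFront i) := by
  simp [moveToFrontMap, word]

lemma moveToFrontMap_mul_word_cons {m : ℕ} {a : 𝔸} (ha : a ∈ homogeneous R α m) (x : α)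
    (r : List α) : moveToFrontMap R α m (a * word (x :: r)) = word [x] * a * word r := by
  have hwords : Set.EqOn (moveToFrontMap R α m ∘ₗ LinearMap.mulRight R (word (x :: r)))
      (LinearMap.mulRight R (word r) ∘ₗ LinearMap.mulLeft R (word [x]))
      (word '' {l | l.length = m}) := by
    rintro _ ⟨u, rfl, rfl⟩
    simp only [LinearMap.comp_apply, LinearMap.mulRight_apply, LinearMap.mulLeft_apply,
      ← word_append, moveToFrontMap_word, List.moveToFront_append_cons]
    rfl
  exact LinearMap.eqOn_span' hwords ha

end FreeAlgebra

section Permutations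

variable {R : Type*} [CommRing R] {n : ℕ}

variable (R n) in
def toWords : MonoidAlgebra R (Perm (Fin n)) →ₗ[R] MonoidAlgebra R (FreeMonoid (Fin n)) :=
  mapDomainLinearMap R R fun σ => FreeMonoid.ofList (List.ofFn σ)

lemma toWords_of (σ : Perm (Fin n)) : toWords R n (of R _ σ) = word (List.ofFn σ) := by
  simp [toWords, word]

lemma toWords_injective : Function.Injective (toWords R n) :=
  mapDomain_injective fun _ _ h =>
    DFunLike.coe_injective (List.ofFn_injective (FreeMonoid.ofList.injective h))

lemma toWords_mul_of_cycleRange_inv (y : MonoidAlgebra R (Perm (Fin n))) (j : Fin n) :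
    toWords R n (y * of R _ j.cycleRange⁻¹) = moveToFrontMap R (Fin n) j (toWords R n y) := by
  induction y using MonoidAlgebra.induction_on with
  | of σ =>
    rw [← map_mul, toWords_of, toWords_of, moveToFrontMap_word, List.ofFn_mul_cycleRange_inv]
  | add y z hy hz => rw [add_mul, map_add, map_add, map_add, hy, hz]
  | smul c y hy => rw [smul_mul_assoc, map_smul, map_smul, map_smul, hy]

end Permutations

section GroupAlgebra

variable {F : Type*} [Field F] {n : ℕ}

lemma dswPartial_one : dswPartial F n 1 = 1 := by
  cases n <;> simp [dswPartial, List.finRange_succ]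

lemma dswPartial_succ {m : ℕ} (hm : 1 ≤ m) (h : m < n) :
    dswPartial F n (m + 1) = dswPartial F n m * (1 - of F _ (Fin.cycleRange ⟨m, h⟩)⁻¹) := by
  have hL : m < (List.finRange n).length := by simpa using h
  rw [dswPartial, dswPartial, List.take_add_one, List.getElem?_eq_getElem hL,
    List.tail_append_of_ne_nil
      (by simp only [ne_eq, List.take_eq_nil_iff, List.finRange_eq_nil_iff, not_or]; omega)]
  simp

lemma toWords_of_mul_dswPartial (τ : Perm (Fin n)) {m : ℕ} (hm : 1 ≤ m) (hmn : m ≤ n) :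
    toWords F n (of F _ τ * dswPartial F n m) =
      lieWord ((List.ofFn τ).take m) * word ((List.ofFn τ).drop m) := by
  induction m, hm using Nat.le_induction with
  | base =>
    obtain ⟨x, r, hxr⟩ := List.exists_cons_of_length_pos (l := List.ofFn τ)
      (by rw [List.length_ofFn]; omega)
    rw [dswPartial_one, mul_one, toWords_of, hxr, List.take_one, List.drop_one, List.head?_cons,
      List.tail_cons, Option.toList_some, lieWord_singleton, word_cons]
  | succ m hm ih =>
    generalize hl : List.ofFn τ = l at ih ⊢
    have hml : m < l.length := by rw [← hl, List.length_ofFn]; omega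
    have hL := lieWord_mem_homogeneous (R := F) (l.take m)
    rw [List.length_take_of_le hml.le] at hL
    have htake : l.take (m + 1) = l.take m ++ [l[m]] := by
      rw [List.take_add_one, List.getElem?_eq_getElem hml, Option.toList_some]
    have hne : l.take m ≠ [] :=
      List.ne_nil_of_length_pos (by rw [List.length_take_of_le hml.le]; omega)
    calc toWords F n (of F _ τ * dswPartial F n (m + 1))
        = toWords F n (of F _ τ * dswPartial F n m) -
            moveToFrontMap F (Fin n) m (toWords F n (of F _ τ * dswPartial F n m)) := by
          rw [dswPartial_succ hm (by omega), ← mul_assoc, mul_sub, mul_one, map_sub,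
            toWords_mul_of_cycleRange_inv]
      _ = lieWord (l.take m) * word (l[m] :: l.drop (m + 1)) -
            word [l[m]] * lieWord (l.take m) * word (l.drop (m + 1)) := by
          rw [ih (by omega), List.drop_eq_getElem_cons hml, moveToFrontMap_mul_word_cons hL]
      _ = lieWord (l.take (m + 1)) * word (l.drop (m + 1)) := by
          rw [htake, lieWord_append_singleton hne, word_cons, Ring.lie_def]
          noncomm_ring

lemma toWords_mul_dsw (hn : 1 ≤ n) (y : MonoidAlgebra F (Perm (Fin n))) :
    toWords F n (y * dsw F n) = dynkin F (Fin n) (toWords F n y) := by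
  induction y using MonoidAlgebra.induction_on with
  | of τ =>
    rw [dsw, toWords_of_mul_dswPartial τ hn le_rfl, List.take_of_length_le (by simp),
      List.drop_of_length_le (by simp), word_nil, mul_one, toWords_of, dynkin_word]
  | add y z hy hz => rw [add_mul, map_add, map_add, map_add, hy, hz]
  | smul c y hy => rw [smul_mul_assoc, map_smul, map_smul, map_smul, hy]

end GroupAlgebra

end DynkinSpechtWever

end

open DynkinSpechtWever in
/-- For every `n ≥ 1` and every field `F`, the Dynkin–Specht–Wever element satisfies
`ω_n² = n·ω_n` in the group algebra `F𝔖_n`. -/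
theorem dsw_mul_self (F : Type*) [Field F] (n : ℕ) (hn : 1 ≤ n) :
    dsw F n * dsw F n = (n : F) • dsw F n := by
  apply toWords_injective (R := F)
  have hω : toWords F n (dsw F n) = lieWord (List.ofFn (1 : Perm (Fin n))) := by
    rw [← one_mul (dsw F n), ← map_one (of F _), toWords_mul_dsw hn, toWords_of, dynkin_word]
  rw [toWords_mul_dsw hn, map_smul, hω, dynkin_lieWord, List.length_ofFn]
end

section
/- For every n ≥ 2 and every field F, one has ω_{n−1}·c_n·ω_n = −ω_n in the group algebra F𝔖_n, where ω_{n−1} is regarded as an element of F𝔖_n via the natural embedding 𝔖_{n−1} ≤ 𝔖_n. -/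
/-!
Send a permutation `σ` to its one-line word `σ(1) σ(2) ⋯ σ(n)` in the free associative algebra
on the letters `1, …, n`; this map is injective. Right multiplication by a permutation becomes
a permutation of the places of a word, and right multiplication by `(1 - c_2) ⋯ (1 - c_m)`
becomes left-normed bracketing of the first `m` letters; in particular `ω_n` acts as the Dynkin
map `θ`. So `ω_{n-1}` goes to `[x_1, …, x_{n-1}] x_n`, the cycle `c_n` moves the last letter to
the front, and since `θ (z P) = ⁅θ z, P⁆` for a Lie element `P` (Jacobi identity), `ω_n` then
produces `⁅x_n, [x_1, …, x_{n-1}]⁆ = -[x_1, …, x_n]`, the image of `-ω_n`.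
-/

attribute [local instance] LieRing.ofAssociativeRing

namespace WordAlgebra

variable (R : Type*) {α : Type*} [CommRing R]

noncomputable def word (l : List α) : MonoidAlgebra R (FreeMonoid α) :=
  MonoidAlgebra.of R (FreeMonoid α) (FreeMonoid.ofList l)

noncomputable def leftNormed : List α → MonoidAlgebra R (FreeMonoid α)
  | [] => 0
  | a :: t => t.foldl (fun z b => ⁅z, word R [b]⁆) (word R [a])

variable (α) in
noncomputable def homogeneous (k : ℕ) : Submodule R (MonoidAlgebra R (FreeMonoid α)) :=
  Submodule.span R (word R '' {l | l.length = k})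

variable (α) in
noncomputable def dynkin : MonoidAlgebra R (FreeMonoid α) →ₗ[R] MonoidAlgebra R (FreeMonoid α) :=
  (MonoidAlgebra.basis (FreeMonoid α) R).constr R fun w => leftNormed R w.toList

variable {R}

lemma word_nil : word R ([] : List α) = 1 := map_one _

lemma word_append (u v : List α) : word R (u ++ v) = word R u * word R v := by
  rw [word, FreeMonoid.ofList_append, map_mul]; rfl

lemma leftNormed_singleton (a : α) : leftNormed R [a] = word R [a] := rfl

lemma leftNormed_append_singleton {l : List α} (hl : l ≠ []) (a : α) :
    leftNormed R (l ++ [a]) = ⁅leftNormed R l, word R [a]⁆ := by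
  obtain ⟨b, t, rfl⟩ := List.exists_cons_of_ne_nil hl
  simp [leftNormed, List.foldl_append]

lemma dynkin_word (l : List α) : dynkin R α (word R l) = leftNormed R l :=
  (MonoidAlgebra.basis (FreeMonoid α) R).constr_basis R _ _

lemma word_mem_homogeneous (l : List α) : word R l ∈ homogeneous R α l.length :=
  Submodule.subset_span ⟨l, rfl, rfl⟩

lemma mul_mem_homogeneous {k k' : ℕ} {z z' : MonoidAlgebra R (FreeMonoid α)}
    (hz : z ∈ homogeneous R α k) (hz' : z' ∈ homogeneous R α k') :
    z * z' ∈ homogeneous R α (k + k') := by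
  have hmul := Submodule.mul_mem_mul hz hz'
  rw [homogeneous, homogeneous, Submodule.span_mul_span] at hmul
  refine Submodule.span_mono ?_ hmul
  rintro _ ⟨_, ⟨u, hu, rfl⟩, _, ⟨v, hv, rfl⟩, rfl⟩
  exact ⟨u ++ v, by simp_all, word_append u v⟩

lemma leftNormed_mem_homogeneous (l : List α) : leftNormed R l ∈ homogeneous R α l.length := by
  induction l using List.reverseRecOn with
  | nil => exact zero_mem _
  | append_singleton l a ih =>
    rcases eq_or_ne l [] with rfl | hl
    · exact word_mem_homogeneous [a]
    · rw [leftNormed_append_singleton hl, Ring.lie_def, List.length_append]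
      have ha := word_mem_homogeneous (R := R) [a]
      exact sub_mem (mul_mem_homogeneous ih ha) (add_comm l.length _ ▸ mul_mem_homogeneous ha ih)

lemma dynkin_mul_word_singleton {k : ℕ} (hk : k ≠ 0) {z : MonoidAlgebra R (FreeMonoid α)}
    (hz : z ∈ homogeneous R α k) (a : α) :
    dynkin R α (z * word R [a]) = ⁅dynkin R α z, word R [a]⁆ := by
  induction hz using Submodule.span_induction with
  | mem _ hx =>
    obtain ⟨u, hu, rfl⟩ := hx
    have hu' : u ≠ [] := by rintro rfl; exact hk hu.symm
    rw [← word_append, dynkin_word, dynkin_word, leftNormed_append_singleton hu']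
  | zero => rw [zero_mul, map_zero, zero_lie]
  | add x y _ _ hx hy => rw [add_mul, map_add, map_add, hx, hy, add_lie]
  | smul r x _ hx => rw [smul_mul_assoc, map_smul, map_smul, hx, smul_lie]

lemma dynkin_mul_leftNormed {k : ℕ} (hk : k ≠ 0) {z : MonoidAlgebra R (FreeMonoid α)}
    (hz : z ∈ homogeneous R α k) {l : List α} (hl : l ≠ []) :
    dynkin R α (z * leftNormed R l) = ⁅dynkin R α z, leftNormed R l⁆ := by
  induction l using List.reverseRecOn generalizing k z with
  | nil => exact absurd rfl hl
  | append_singleton l a ih =>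
    rcases eq_or_ne l [] with rfl | hl'
    · exact dynkin_mul_word_singleton hk hz a
    have hzl := mul_mem_homogeneous hz (leftNormed_mem_homogeneous (R := R) l)
    have hza := mul_mem_homogeneous hz (word_mem_homogeneous (R := R) [a])
    calc dynkin R α (z * leftNormed R (l ++ [a]))
        = dynkin R α (z * leftNormed R l * word R [a])
          - dynkin R α (z * word R [a] * leftNormed R l) := by
          rw [leftNormed_append_singleton hl', Ring.lie_def, mul_sub, map_sub, mul_assoc,
            mul_assoc]
      _ = ⁅⁅dynkin R α z, leftNormed R l⁆, word R [a]⁆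
          - ⁅⁅dynkin R α z, word R [a]⁆, leftNormed R l⁆ := by
          rw [dynkin_mul_word_singleton (by omega) hzl, ih hk hz hl', ih (by omega) hza hl',
            dynkin_mul_word_singleton hk hz]
      _ = ⁅dynkin R α z, leftNormed R (l ++ [a])⁆ := by
          rw [leftNormed_append_singleton hl', leibniz_lie, ← lie_skew (leftNormed R l),
            sub_eq_add_neg]

open Equiv

def permutePlaces {n : ℕ} (g : Perm (Fin n)) (l : List α) : List α :=
  if h : l.length = n then List.ofFn fun i => l.get ((g i).cast h.symm) else l

lemma permutePlaces_ofFn {n : ℕ} (g : Perm (Fin n)) (f : Fin n → α) :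
    permutePlaces g (List.ofFn f) = List.ofFn (f ∘ g) := by
  simp [permutePlaces, Function.comp_def]

lemma permutePlaces_cycleRange_inv {n m : ℕ} (hm : m < n) {u v : List α} (a : α)
    (hu : u.length = m) (huv : m + v.length + 1 = n) :
    permutePlaces (Fin.cycleRange (⟨m, hm⟩ : Fin n))⁻¹ (u ++ a :: v) = a :: (u ++ v) := by
  obtain ⟨N, rfl⟩ : ∃ N, n = N + 1 := ⟨m + v.length, huv.symm⟩
  have hlen : (u ++ a :: v).length = N + 1 := by
    simp only [List.length_append, List.length_cons]; omega
  rw [permutePlaces, dif_pos hlen, List.ofFn_succ, Perm.inv_def, Fin.cycleRange_symm_zero]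
  congr 1
  · simp [List.getElem_append_right, hu]
  · refine List.ext_getElem (by simp only [List.length_ofFn, List.length_append]; omega)
      fun j hj _ => ?_
    simp only [List.length_ofFn] at hj
    simp only [Fin.cycleRange_symm_succ, List.getElem_ofFn, List.get_eq_getElem, Fin.val_cast]
    rcases lt_or_ge j m with hjm | hjm
    · rw [Fin.succAbove_of_castSucc_lt _ _ (by simpa [Fin.lt_def] using hjm)]
      simp [List.getElem_append_left, hu, hjm]
    · rw [Fin.succAbove_of_le_castSucc _ _ (by simpa [Fin.le_def] using hjm)]
      simp only [Fin.val_succ]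
      rw [List.getElem_append_right (by omega), List.getElem_append_right (by omega)]
      simp only [hu, Nat.sub_add_comm hjm, List.getElem_cons_succ]

variable (R α) in
noncomputable def permutePlacesMap {n : ℕ} (g : Perm (Fin n)) :
    MonoidAlgebra R (FreeMonoid α) →ₗ[R] MonoidAlgebra R (FreeMonoid α) :=
  MonoidAlgebra.mapDomainLinearMap R R fun w => FreeMonoid.ofList (permutePlaces g w.toList)

variable (R α) in
noncomputable def bracketPrefix (m : ℕ) :
    MonoidAlgebra R (FreeMonoid α) →ₗ[R] MonoidAlgebra R (FreeMonoid α) :=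
  (MonoidAlgebra.basis (FreeMonoid α) R).constr R fun w =>
    leftNormed R (w.toList.take m) * word R (w.toList.drop m)

lemma permutePlacesMap_word {n : ℕ} (g : Perm (Fin n)) (l : List α) :
    permutePlacesMap R α g (word R l) = word R (permutePlaces g l) :=
  MonoidAlgebra.mapDomainLinearMap_single _ _ _

lemma bracketPrefix_word (m : ℕ) (l : List α) :
    bracketPrefix R α m (word R l) = leftNormed R (l.take m) * word R (l.drop m) :=
  (MonoidAlgebra.basis (FreeMonoid α) R).constr_basis R _ _

lemma permutePlacesMap_cycleRange_inv_mul {n m : ℕ} (hm : m < n)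
    {z : MonoidAlgebra R (FreeMonoid α)} (hz : z ∈ homogeneous R α m) (a : α) {v : List α} (hv : m + v.length + 1 = n) :
    permutePlacesMap R α (Fin.cycleRange (⟨m, hm⟩ : Fin n))⁻¹ (z * word R (a :: v))
      = word R [a] * z * word R v := by
  refine LinearMap.eqOn_span
    (f := permutePlacesMap R α (Fin.cycleRange (⟨m, hm⟩ : Fin n))⁻¹ ∘ₗ
      LinearMap.mulRight R (word R (a :: v)))
    (g := LinearMap.mulRight R (word R v) ∘ₗ LinearMap.mulLeft R (word R [a])) ?_ hz
  rintro _ ⟨u, hu, rfl⟩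
  simp only [LinearMap.comp_apply, LinearMap.mulRight_apply, LinearMap.mulLeft_apply]
  rw [← word_append, permutePlacesMap_word, permutePlaces_cycleRange_inv hm a hu hv, ← word_append,
    ← word_append]
  rfl

lemma bracketPrefix_one_of_mem_homogeneous {k : ℕ} (hk : k ≠ 0) {z : MonoidAlgebra R (FreeMonoid α)}
    (hz : z ∈ homogeneous R α k) : bracketPrefix R α 1 z = z := by
  refine LinearMap.eqOn_span (g := LinearMap.id) ?_ hz
  rintro _ ⟨l, (hl : l.length = k), rfl⟩
  obtain ⟨a, t, rfl⟩ := List.exists_cons_of_length_pos (l := l) (by omega)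
  rw [bracketPrefix_word, List.take_succ_cons, List.take_zero, List.drop_succ_cons, List.drop_zero,
    leftNormed_singleton, ← word_append]
  rfl

lemma bracketPrefix_eq_dynkin_of_mem_homogeneous {k m : ℕ} (hkm : k ≤ m)
    {z : MonoidAlgebra R (FreeMonoid α)} (hz : z ∈ homogeneous R α k) : bracketPrefix R α m z = dynkin R α z := by
  refine LinearMap.eqOn_span ?_ hz
  rintro _ ⟨l, rfl, rfl⟩
  rw [bracketPrefix_word, dynkin_word, List.take_of_length_le hkm, List.drop_of_length_le hkm]
  exact mul_one _

lemma bracketPrefix_succ_of_mem_homogeneous {n m : ℕ} (hm : m ≠ 0) (hmn : m < n)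
    {z : MonoidAlgebra R (FreeMonoid α)} (hz : z ∈ homogeneous R α n) :
    bracketPrefix R α (m + 1) z
      = bracketPrefix R α m z
        - permutePlacesMap R α (Fin.cycleRange (⟨m, hmn⟩ : Fin n))⁻¹ (bracketPrefix R α m z) := by
  refine LinearMap.eqOn_span (g := bracketPrefix R α m
    - permutePlacesMap R α (Fin.cycleRange (⟨m, hmn⟩ : Fin n))⁻¹ ∘ₗ bracketPrefix R α m) ?_ hz
  rintro _ ⟨l, (hl : l.length = n), rfl⟩
  obtain ⟨u, a, v, rfl, hu⟩ : ∃ (u : List α) (a : α) (v : List α), l = u ++ a :: v ∧ u.length = m :=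
    ⟨l.take m, l[m], l.drop (m + 1), by simp, by rw [List.length_take]; omega⟩
  subst hu
  have hu' : u ≠ [] := List.ne_nil_of_length_pos (by omega)
  have hv : u.length + v.length + 1 = n := by
    simp only [List.length_append, List.length_cons] at hl; omega
  have hlen : (u ++ [a]).length = u.length + 1 := List.length_append
  simp only [LinearMap.sub_apply, LinearMap.comp_apply, bracketPrefix_word]
  rw [List.take_left' rfl, List.drop_left' rfl,
    permutePlacesMap_cycleRange_inv_mul hmn (leftNormed_mem_homogeneous u) a hv,
    show u ++ a :: v = (u ++ [a]) ++ v by simp, List.take_left' hlen, List.drop_left' hlen,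
    leftNormed_append_singleton hu', Ring.lie_def, show a :: v = [a] ++ v from rfl, word_append]
  noncomm_ring

variable {n : ℕ}

def oneLine (σ : Perm (Fin n)) : FreeMonoid (Fin n) :=
  FreeMonoid.ofList (List.ofFn σ)

variable (R n) in
noncomputable def oneLineMap :
    MonoidAlgebra R (Perm (Fin n)) →ₗ[R] MonoidAlgebra R (FreeMonoid (Fin n)) :=
  MonoidAlgebra.mapDomainLinearMap R R oneLine

lemma oneLineMap_of (σ : Perm (Fin n)) :
    oneLineMap R n (MonoidAlgebra.of R _ σ) = word R (List.ofFn σ) :=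
  MonoidAlgebra.mapDomainLinearMap_single _ _ _

lemma oneLineMap_one (N : ℕ) :
    oneLineMap R (N + 1) 1 = word R (List.ofFn Fin.castSucc ++ [Fin.last N]) := by
  rw [← map_one (MonoidAlgebra.of R (Perm (Fin (N + 1)))), oneLineMap_of, List.ofFn_succ',
    List.concat_eq_append]
  rfl

lemma oneLineMap_injective : Function.Injective (oneLineMap R n) :=
  MonoidAlgebra.mapDomain_injective fun _ _ h =>
    DFunLike.coe_injective (List.ofFn_injective (FreeMonoid.ofList.injective h))

lemma oneLineMap_mem_homogeneous (x : MonoidAlgebra R (Perm (Fin n))) :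
    oneLineMap R n x ∈ homogeneous R (Fin n) n := by
  induction x using MonoidAlgebra.induction_linear with
  | zero => simp
  | add x y hx hy => rw [map_add]; exact add_mem hx hy
  | single σ r =>
    rw [← MonoidAlgebra.smul_of, map_smul, oneLineMap_of]
    have hσ := word_mem_homogeneous (R := R) (List.ofFn σ)
    rw [List.length_ofFn] at hσ
    exact Submodule.smul_mem _ _ hσ

lemma oneLineMap_mul_of (x : MonoidAlgebra R (Perm (Fin n))) (g : Perm (Fin n)) :
    oneLineMap R n (x * MonoidAlgebra.of R _ g)
      = permutePlacesMap R (Fin n) g (oneLineMap R n x) := by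
  induction x using MonoidAlgebra.induction_linear with
  | zero => simp
  | add x y hx hy => rw [add_mul, map_add, hx, hy, map_add, map_add]
  | single σ r =>
    rw [← MonoidAlgebra.smul_of, smul_mul_assoc, ← map_mul, map_smul, map_smul, map_smul,
      oneLineMap_of, oneLineMap_of, permutePlacesMap_word, permutePlaces_ofFn, Perm.coe_mul]

end WordAlgebra

open Equiv WordAlgebra

lemma dswPartial_one (F : Type*) [Field F] (n : ℕ) : dswPartial F n 1 = 1 := by
  cases n <;> simp [dswPartial, List.finRange_succ]

lemma dswPartial_succ (F : Type*) [Field F] {n m : ℕ} (hm : m ≠ 0) (hmn : m < n) :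
    dswPartial F n (m + 1) = dswPartial F n m *
      (1 - MonoidAlgebra.of F (Perm (Fin n)) (Fin.cycleRange (⟨m, hmn⟩ : Fin n))⁻¹) := by
  have htake : (List.finRange n).take (m + 1) = (List.finRange n).take m ++ [⟨m, hmn⟩] := by
    rw [List.take_add_one, List.getElem?_eq_getElem (by simpa using hmn)]
    simp
  have hne : (List.finRange n).take m ≠ [] := by
    simp only [ne_eq, List.take_eq_nil_iff, List.finRange_eq_nil_iff, not_or]; omega
  rw [dswPartial, htake, List.tail_append_of_ne_nil hne, List.map_append, List.prod_append]
  simp [dswPartial]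

lemma oneLineMap_mul_dswPartial {F : Type*} [Field F] {n m : ℕ} (hm : m ≠ 0) (hmn : m ≤ n)
    (x : MonoidAlgebra F (Perm (Fin n))) :
    oneLineMap F n (x * dswPartial F n m) = bracketPrefix F (Fin n) m (oneLineMap F n x) := by
  induction m, Nat.one_le_iff_ne_zero.mpr hm using Nat.le_induction with
  | base =>
    rw [dswPartial_one, mul_one,
      bracketPrefix_one_of_mem_homogeneous (by omega) (oneLineMap_mem_homogeneous x)]
  | succ m hm1 ih =>
    rw [dswPartial_succ F (by omega) (by omega), mul_sub, mul_one, mul_sub, ← mul_assoc, map_sub,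
      oneLineMap_mul_of, ih (by omega) (by omega),
      bracketPrefix_succ_of_mem_homogeneous (by omega) (by omega) (oneLineMap_mem_homogeneous x)]

lemma oneLineMap_mul_dsw {F : Type*} [Field F] {n : ℕ} (hn : n ≠ 0)
    (x : MonoidAlgebra F (Perm (Fin n))) :
    oneLineMap F n (x * dsw F n) = dynkin F (Fin n) (oneLineMap F n x) := by
  rw [dsw, oneLineMap_mul_dswPartial (by omega) le_rfl,
    bracketPrefix_eq_dynkin_of_mem_homogeneous le_rfl (oneLineMap_mem_homogeneous x)]

/-- For every `n ≥ 2` and every field `F`, one has `ω_{n−1}·c_n·ω_n = −ω_n` in `F𝔖_n`,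
where `ω_{n−1}` is regarded as an element of `F𝔖_n` via the embedding `𝔖_{n−1} ≤ 𝔖_n`,
and `c_n` is the backward cycle `(n, n-1, …, 2, 1)`. -/
theorem dswPartial_cycle_mul (F : Type*) [Field F] (n : ℕ) (hn : 2 ≤ n) :
    dswPartial F n (n - 1) *
      MonoidAlgebra.of F (Equiv.Perm (Fin n)) (Fin.cycleRange (⟨n - 1, by omega⟩ : Fin n))⁻¹ *
      dsw F n = - dsw F n := by
  obtain ⟨N, rfl⟩ : ∃ N, n = N + 1 := ⟨n - 1, by omega⟩
  simp only [Nat.add_sub_cancel]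
  apply oneLineMap_injective (R := F)
  set u := List.ofFn (Fin.castSucc : Fin N → Fin (N + 1))
  set a := Fin.last N
  have hu : u.length = N := List.length_ofFn
  have hu' : u ≠ [] := List.ne_nil_of_length_pos (by omega)
  have hu_mem : leftNormed F u ∈ homogeneous F (Fin (N + 1)) N := by
    have h := leftNormed_mem_homogeneous (R := F) u
    rwa [hu] at h
  have hω' : oneLineMap F _ (dswPartial F (N + 1) N) = leftNormed F u * word F [a] := by
    rw [← one_mul (dswPartial F _ _), oneLineMap_mul_dswPartial (by omega) (by omega),
      oneLineMap_one, bracketPrefix_word, List.take_left' hu, List.drop_left' hu]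
  have hω : oneLineMap F _ (dsw F (N + 1)) = ⁅leftNormed F u, word F [a]⁆ := by
    rw [← one_mul (dsw F _), oneLineMap_mul_dsw (by omega), oneLineMap_one, dynkin_word,
      leftNormed_append_singleton hu']
  calc oneLineMap F _ (dswPartial F (N + 1) N * MonoidAlgebra.of F _ (Fin.cycleRange ⟨N, _⟩)⁻¹
        * dsw F (N + 1))
      = dynkin F _ (word F [a] * leftNormed F u) := by
        rw [oneLineMap_mul_dsw (by omega), oneLineMap_mul_of, hω',
          permutePlacesMap_cycleRange_inv_mul (v := []) _ hu_mem a rfl, word_nil, mul_one]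
    _ = ⁅word F [a], leftNormed F u⁆ := by
        rw [dynkin_mul_leftNormed one_ne_zero (word_mem_homogeneous [a]) hu', dynkin_word,
          leftNormed_singleton]
    _ = oneLineMap F _ (-dsw F (N + 1)) := by rw [map_neg, hω, lie_skew]
end

section
/- For every n ≥ 2 and every field F, the set {π·c_n·ω_n : π ∈ 𝔖_{n−1}} is an F-basis of the left ideal F𝔖_n·ω_n; in particular, dim_F(Lie_F(n)) = (n−1)!. -/
/-!
Points are numbered from `0`, so the paper's letter `1` is `0 : Fin n`. Expanding
`ω = (1 - c_2)⋯(1 - c_n)`, every nonempty product `c_{k_1}⋯c_{k_r}` (`k_1 < ⋯ < k_r`) sends `0` to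
`k_r - 1 ≠ 0`, so `ω` agrees with `1` on the stabilizer of `0`. Hence for `τ, τ'` in the coset
`{τ | τ 0 = i} = 𝔖_{n-1} c` the coefficient of `τ ω` at `τ'` is `δ_{τ τ'}`, which gives linear
independence.

For spanning it suffices that `ω` lies in the span `T_j` of `{τ ω | τ 0 = j}` for every `j`, because
`σ T_j ⊆ T_{σ j}`. For `j ≥ 1` this comes from an identity `ω = -c_{j+1} x ω` with `x` a combination
of permutations fixing `0`: the group-algebra form of the Jacobi-identity argument expressing a
left-normed Lie monomial through left-normed monomials that begin with a prescribed letter. It is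
proved for all windows `[b, b + m]` at once, by induction on `m`. The dimension is then
`|𝔖_{n-1}| = (n-1)!`.
-/

open Equiv MonoidAlgebra Submodule

lemma Equiv.Perm.natCard_stabilizer {α : Type*} [Finite α] (a : α) :
    Nat.card (MulAction.stabilizer (Perm α) a) = Nat.factorial (Nat.card α - 1) := by
  have h := (MulAction.stabilizer (Perm α) a).card_mul_index
  have hpos : 0 < Nat.card α := Nat.card_pos_iff.2 ⟨⟨a⟩, inferInstance⟩
  rw [MulAction.index_stabilizer_of_transitive, Nat.card_perm, ← Nat.mul_factorial_pred hpos.ne',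
    mul_comm] at h
  exact Nat.eq_of_mul_eq_mul_left hpos h

namespace MonoidAlgebra

variable {k G : Type*} [CommSemiring k] [Monoid G]

lemma restrictScalars_span_singleton (a : MonoidAlgebra k G) :
    (span (MonoidAlgebra k G) {a}).restrictScalars k =
      span k (Set.range fun g => of k G g * a) := by
  refine le_antisymm ?_
    (span_le.2 (Set.range_subset_iff.2 fun g => mem_span_singleton.2 ⟨of k G g, rfl⟩))
  let W := submoduleOfSMulMem (span k (Set.range fun g => of k G g * a)) fun g v hv => by
    induction hv using span_induction with
    | mem _ hv =>
      obtain ⟨h, rfl⟩ := hv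
      exact subset_span ⟨g * h, by simp only [map_mul, smul_eq_mul, mul_assoc]⟩
    | zero => simp
    | add _ _ _ _ hv hw => rw [smul_add]; exact add_mem hv hw
    | smul r _ _ hv => rw [smul_comm]; exact smul_mem _ r hv
  have ha : a ∈ W := subset_span ⟨1, by simp only [map_one, one_mul]⟩
  exact (span_le.2 (Set.singleton_subset_iff.2 ha) : span (MonoidAlgebra k G) {a} ≤ W)

lemma linearIndependent_of_mul_of_coeff {k G ι : Type*} [Semiring k] [Group G] {H : Subgroup G}
    {ω : MonoidAlgebra k G} (hω : ∀ h ∈ H, ω.coeff h = (1 : MonoidAlgebra k G).coeff h)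
    {f : ι → G} (hf : Function.Injective f) (hfH : ∀ a b, (f a)⁻¹ * f b ∈ H) :
    LinearIndependent k fun a => of k G (f a) * ω := by
  classical
  let L : MonoidAlgebra k G →ₗ[k] ι → k :=
    LinearMap.pi fun b => Finsupp.lapply (f b) ∘ₗ (coeffLinearEquiv k).toLinearMap
  refine LinearIndependent.of_comp L ?_
  convert Pi.linearIndependent_single_one ι k with a
  ext b
  have hL : L (of k G (f a) * ω) b = ω.coeff ((f a)⁻¹ * f b) := by
    simp [L, coeffLinearEquiv, coeff_single_mul_apply]
  rw [Function.comp_apply, hL, hω _ (hfH a b), one_def, coeff_single, Finsupp.single_apply,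
    Pi.single_apply, eq_comm (a := (1 : G)), inv_mul_eq_one, hf.eq_iff, eq_comm (a := b)]

end MonoidAlgebra

namespace DynkinSpechtWever

section WindowPermutations

variable {n : ℕ}

noncomputable def permOfNat (f : ℕ → ℕ) (hf : ∀ k < n, f k < n)
    (hinj : ∀ k < n, ∀ l < n, f k = f l → k = l) : Perm (Fin n) :=
  Equiv.ofBijective (fun x => ⟨f x, hf x x.2⟩) <| Finite.injective_iff_bijective.mp
    fun x y h => Fin.ext (hinj x x.2 y y.2 (congrArg Fin.val h))

lemma val_permOfNat (f : ℕ → ℕ) (hf : ∀ k < n, f k < n)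
    (hinj : ∀ k < n, ∀ l < n, f k = f l → k = l) (x : Fin n) :
    (permOfNat f hf hinj x : ℕ) = f x := rfl

/-- Zero-based form of the cycle `(a+w, a+w-1, …, a+1)`; `cycleFun 0 w` is the paper's `c_w`. -/
def cycleFun (a w k : ℕ) : ℕ :=
  if k = a then a + (w - 1) else if a < k ∧ k < a + w then k - 1 else k

def rotateFun (b m k : ℕ) : ℕ :=
  if k < m then k + b else if k < b + m then k - m else k

/-- `1` when the window `[a, a + w)` does not fit into `Fin n`. -/
noncomputable def windowCycle (n a w : ℕ) : Perm (Fin n) :=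
  if h : a + w ≤ n then
    permOfNat (cycleFun a w) (fun k hk => by unfold cycleFun; split_ifs <;> omega)
      (fun k hk l hl => by unfold cycleFun; split_ifs <;> omega)
  else 1

noncomputable def blockRotate (n b m : ℕ) : Perm (Fin n) :=
  if h : b + m ≤ n then
    permOfNat (rotateFun b m) (fun k hk => by unfold rotateFun; split_ifs <;> omega)
      (fun k hk l hl => by unfold rotateFun; split_ifs <;> omega)
  else 1

lemma val_windowCycle {a w : ℕ} (h : a + w ≤ n) (x : Fin n) :
    (windowCycle n a w x : ℕ) = cycleFun a w x := by
  rw [windowCycle, dif_pos h, val_permOfNat]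

lemma val_blockRotate {b m : ℕ} (h : b + m ≤ n) (x : Fin n) :
    (blockRotate n b m x : ℕ) = rotateFun b m x := by
  rw [blockRotate, dif_pos h, val_permOfNat]

lemma windowCycle_mem_fixingSubgroup (a w : ℕ) :
    windowCycle n a w ∈
      fixingSubgroup (Perm (Fin n)) {x : Fin n | (x : ℕ) < a ∨ a + w ≤ x} := by
  rw [mem_fixingSubgroup_iff]
  rintro x hx
  by_cases h : a + w ≤ n
  · simp only [Set.mem_ofPred_eq] at hx
    ext
    rw [Perm.smul_def, val_windowCycle h]
    unfold cycleFun
    split_ifs <;> omega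
  · rw [windowCycle, dif_neg h]
    rfl

lemma windowCycle_apply_of_le {c : ℕ} {x : Fin n} (hx : c ≤ x) : windowCycle n 0 c x = x :=
  (mem_fixingSubgroup_iff _).1 (windowCycle_mem_fixingSubgroup 0 c) x (Or.inr (by omega))

lemma val_windowCycle_apply_zero {j : ℕ} [NeZero n] (h : j + 1 ≤ n) :
    (windowCycle n 0 (j + 1) 0 : ℕ) = j := by
  rw [val_windowCycle (by omega)]
  simp [cycleFun]

lemma inv_cycleRange (j : Fin n) : (Fin.cycleRange j)⁻¹ = windowCycle n 0 (j + 1) := by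
  refine inv_eq_of_mul_eq_one_right (Perm.ext fun x => Fin.ext ?_)
  have hy := val_windowCycle (show 0 + (j + 1) ≤ n by omega) x
  rw [Perm.mul_apply, Perm.one_apply]
  unfold cycleFun at hy
  rcases le_or_gt (windowCycle n 0 (j + 1) x) j with h | h
  · rw [Fin.coe_cycleRange_of_le h]
    simp only [Fin.ext_iff]
    split_ifs at hy ⊢ <;> omega
  · rw [Fin.cycleRange_of_gt h]
    rw [Fin.lt_def] at h
    split_ifs at hy <;> omega

variable {a b m w : ℕ}

lemma windowCycle_mul_windowCycle_succ {s : ℕ} (hs : s < w) (h : a + w ≤ n) :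
    windowCycle n a w * windowCycle n (a + 1) s = windowCycle n a s * windowCycle n a w := by
  ext x
  simp (disch := omega) only [Perm.mul_apply, val_windowCycle, cycleFun]
  split_ifs <;> first | contradiction | omega

lemma blockRotate_one (h : b + 1 ≤ n) : blockRotate n b 1 = windowCycle n 0 (b + 1) := by
  ext x
  simp (disch := omega) only [val_windowCycle, val_blockRotate, cycleFun, rotateFun]
  split_ifs <;> first | contradiction | omega

lemma windowCycle_zero_mul_blockRotate_one (h : m + 2 ≤ n) :
    windowCycle n 0 (m + 2) * blockRotate n 1 (m + 1) = 1 := by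
  ext x
  simp (disch := omega) only [Perm.mul_apply, Perm.one_apply, val_windowCycle, val_blockRotate,
    cycleFun, rotateFun]
  split_ifs <;> first | contradiction | omega

section JacobiStep

variable (h : b + m + 2 ≤ n)
include h

lemma windowCycle_mul_blockRotate :
    windowCycle n b (m + 2) * blockRotate n b (m + 2) =
      blockRotate n b (m + 1) * windowCycle n 0 (b + m + 2) := by
  ext x
  simp (disch := omega) only [Perm.mul_apply, val_windowCycle, val_blockRotate, cycleFun,
    rotateFun]
  split_ifs <;> first | contradiction | omega

lemma windowCycle_mul_blockRotate_succ :
    windowCycle n b (m + 2) * blockRotate n (b + 1) (m + 1) = blockRotate n b (m + 1) := by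
  ext x
  simp (disch := omega) only [Perm.mul_apply, val_windowCycle, val_blockRotate, cycleFun,
    rotateFun]
  split_ifs <;> first | contradiction | omega

lemma windowCycle_mul_windowCycle_zero :
    windowCycle n b (m + 2) * windowCycle n 0 (b + 1) = windowCycle n 0 (b + m + 2) := by
  ext x
  simp (disch := omega) only [Perm.mul_apply, val_windowCycle, cycleFun]
  split_ifs <;> first | contradiction | omega

lemma windowCycle_zero_mul_blockRotate_succ :
    windowCycle n 0 (b + m + 2) * blockRotate n (b + 1) (m + 1) = blockRotate n b (m + 2) := by
  ext x
  simp (disch := omega) only [Perm.mul_apply, val_windowCycle, val_blockRotate, cycleFun,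
    rotateFun]
  split_ifs <;> first | contradiction | omega

end JacobiStep

end WindowPermutations

section FixingAlgebra

variable (k : Type*) [CommSemiring k] {α : Type*}

noncomputable def fixingAlgebra (s : Set α) : Subalgebra k (MonoidAlgebra k (Perm α)) :=
  Algebra.adjoin k (of k (Perm α) '' fixingSubgroup (Perm α) s)

variable {k} {s t : Set α}

lemma of_mem_fixingAlgebra {g : Perm α} (hg : g ∈ fixingSubgroup (Perm α) s) :
    of k (Perm α) g ∈ fixingAlgebra k s :=
  Algebra.subset_adjoin ⟨g, hg, rfl⟩

lemma fixingAlgebra_anti (hst : s ⊆ t) : fixingAlgebra k t ≤ fixingAlgebra k s :=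
  Algebra.adjoin_mono (Set.image_mono (fixingSubgroup_antitone _ _ hst))

lemma toSubmodule_fixingAlgebra (s : Set α) :
    Subalgebra.toSubmodule (fixingAlgebra k s) =
      span k (of k (Perm α) '' fixingSubgroup (Perm α) s) := by
  rw [fixingAlgebra, Algebra.adjoin_eq_span]
  exact congrArg (span k ∘ SetLike.coe)
    (Submonoid.closure_eq ((fixingSubgroup (Perm α) s).toSubmonoid.map (of k (Perm α))))

lemma coeff_eq_zero_of_mem_fixingAlgebra {x : MonoidAlgebra k (Perm α)}
    (hx : x ∈ fixingAlgebra k s) {g : Perm α} (hg : g ∉ fixingSubgroup (Perm α) s) :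
    x.coeff g = 0 := by
  have hx' : x ∈ supported k k (fixingSubgroup (Perm α) s : Set (Perm α)) := by
    rw [supported_eq_span_single]
    exact (toSubmodule_fixingAlgebra s).le hx
  exact mem_supported'.1 hx' g hg

lemma commute_of_mem_fixingAlgebra {g : Perm α} (hg : ∀ x ∉ s, g x = x)
    {y : MonoidAlgebra k (Perm α)} (hy : y ∈ fixingAlgebra k s) :
    Commute (of k (Perm α) g) y := by
  suffices fixingAlgebra k s ≤ Subalgebra.centralizer k {of k (Perm α) g} from
    (Subalgebra.mem_centralizer_iff k).1 (this hy) _ rfl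
  refine Algebra.adjoin_le ?_
  rintro _ ⟨h, hh, rfl⟩
  rw [SetLike.mem_coe, Subalgebra.mem_centralizer_iff]
  rintro _ rfl
  have hdisj : g.Disjoint h := fun x => by
    by_cases hx : x ∈ s
    · exact Or.inr ((mem_fixingSubgroup_iff _).1 hh x hx)
    · exact Or.inl (hg x hx)
  exact (hdisj.commute.map (of k (Perm α))).eq

end FixingAlgebra

section TranslateSpan

variable {k : Type*} [CommSemiring k] {α : Type*}

noncomputable def translateSpan (ω : MonoidAlgebra k (Perm α)) (p j : α) :
    Submodule k (MonoidAlgebra k (Perm α)) :=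
  span k ((fun τ => of k (Perm α) τ * ω) '' {τ | τ p = j})

variable {ω : MonoidAlgebra k (Perm α)} {p : α}

lemma of_mul_mem_translateSpan {x : MonoidAlgebra k (Perm α)} {j : α} (σ : Perm α)
    (hx : x ∈ translateSpan ω p j) : of k (Perm α) σ * x ∈ translateSpan ω p (σ j) := by
  have := mem_map_of_mem (f := LinearMap.mulLeft k (of k (Perm α) σ)) hx
  rw [translateSpan, map_span] at this
  refine span_mono ?_ this
  rintro _ ⟨_, ⟨τ, hτ, rfl⟩, rfl⟩
  refine ⟨σ * τ, ?_, by simp only [LinearMap.mulLeft_apply, map_mul, mul_assoc]⟩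
  rw [Set.mem_ofPred_eq, Perm.mul_apply, show τ p = j from hτ]

lemma of_mul_mul_mem_translateSpan (g : Perm α) {x : MonoidAlgebra k (Perm α)}
    (hx : x ∈ fixingAlgebra k {p}) : of k (Perm α) g * x * ω ∈ translateSpan ω p (g p) := by
  rw [← Subalgebra.mem_toSubmodule, toSubmodule_fixingAlgebra] at hx
  have := mem_map_of_mem
    (f := LinearMap.mulRight k ω ∘ₗ LinearMap.mulLeft k (of k (Perm α) g)) hx
  rw [map_span] at this
  refine span_mono ?_ this
  rintro _ ⟨_, ⟨h, hh, rfl⟩, rfl⟩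
  refine ⟨g * h, ?_, by simp only [LinearMap.comp_apply, LinearMap.mulLeft_apply,
    LinearMap.mulRight_apply, map_mul]⟩
  rw [Set.mem_ofPred_eq, Perm.mul_apply]
  exact congrArg g ((mem_fixingSubgroup_iff _).1 hh p rfl)

theorem restrictScalars_span_singleton_eq_translateSpan (hω : ∀ j, ω ∈ translateSpan ω p j)
    (i : α) :
    (span (MonoidAlgebra k (Perm α)) {ω}).restrictScalars k = translateSpan ω p i := by
  rw [restrictScalars_span_singleton]
  refine le_antisymm (span_le.2 ?_) (span_mono ?_)
  · rintro _ ⟨σ, rfl⟩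
    simpa using of_mul_mem_translateSpan σ (hω (σ⁻¹ i))
  · rintro _ ⟨τ, -, rfl⟩
    exact ⟨τ, rfl⟩

lemma span_range_stabilizer_mul {c : Perm α} {i : α} (hc : c p = i) :
    span k (Set.range fun π : MulAction.stabilizer (Perm α) i =>
      of k (Perm α) π * of k (Perm α) c * ω) = translateSpan ω p i := by
  refine congrArg (span k) (Set.ext fun x => ⟨?_, ?_⟩)
  · rintro ⟨π, rfl⟩
    refine ⟨π * c, ?_, by simp only [map_mul]⟩
    rw [Set.mem_ofPred_eq, Perm.mul_apply, hc]
    exact π.2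
  · rintro ⟨τ, hτ, rfl⟩
    have hτc : τ * c⁻¹ ∈ MulAction.stabilizer (Perm α) i := by
      rw [MulAction.mem_stabilizer_iff, Perm.smul_def, Perm.mul_apply, Perm.inv_eq_iff_eq.2 hc.symm]
      exact hτ
    exact ⟨⟨_, hτc⟩, by simp only [← map_mul, inv_mul_cancel_right]⟩

lemma linearIndependent_stabilizer_mul {c : Perm α} {i : α} (hc : c p = i)
    (hω : ∀ g : Perm α, g p = p → ω.coeff g = (1 : MonoidAlgebra k (Perm α)).coeff g) :
    LinearIndependent k fun π : MulAction.stabilizer (Perm α) i =>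
      of k (Perm α) π * of k (Perm α) c * ω := by
  have hπc : ∀ π : MulAction.stabilizer (Perm α) i, ((π : Perm α) * c) p = i := fun π => by
    rw [Perm.mul_apply, hc]
    exact π.2
  simpa only [map_mul] using linearIndependent_of_mul_of_coeff
    (H := MulAction.stabilizer (Perm α) p) (fun g hg => hω g hg)
    (f := fun π : MulAction.stabilizer (Perm α) i => (π : Perm α) * c)
    (fun π π' h => Subtype.ext (mul_right_cancel h))
    (fun π π' => by
      rw [MulAction.mem_stabilizer_iff, Perm.smul_def, Perm.mul_apply, Perm.inv_eq_iff_eq, hπc,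
        hπc])

end TranslateSpan

section CycleProducts

variable {k : Type*} [CommRing k] {n : ℕ}

local notation "⌜" g "⌝" => MonoidAlgebra.of k (Perm (Fin n)) g

variable (k n) in
/-- `cycleProd k n a 2 m` is the Dynkin–Specht–Wever element `ω_{m+1}` of the window
`[a, a + m]`. -/
noncomputable def cycleProd (a s l : ℕ) : MonoidAlgebra k (Perm (Fin n)) :=
  ((List.range' s l).map fun w => 1 - ⌜windowCycle n a w⌝).prod

variable {a b m s l : ℕ}

@[simp] lemma cycleProd_zero : cycleProd k n a s 0 = 1 := rfl

lemma cycleProd_add (l' : ℕ) :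
    cycleProd k n a s (l + l') = cycleProd k n a s l * cycleProd k n a (s + l) l' := by
  rw [cycleProd, ← List.range'_append_1, List.map_append, List.prod_append, cycleProd, cycleProd]

lemma cycleProd_succ :
    cycleProd k n a s (l + 1) = cycleProd k n a s l * (1 - ⌜windowCycle n a (s + l)⌝) := by
  rw [cycleProd_add]
  simp [cycleProd]

lemma cycleProd_succ' :
    cycleProd k n a s (l + 1) = (1 - ⌜windowCycle n a s⌝) * cycleProd k n a (s + 1) l := by
  rw [add_comm, cycleProd_add]
  simp [cycleProd]

lemma cycleProd_mem_fixingAlgebra :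
    cycleProd k n a s l ∈
      fixingAlgebra k {x : Fin n | (x : ℕ) < a ∨ a + s + l ≤ x + 1} := by
  refine Subalgebra.list_prod_mem _ fun y hy => ?_
  obtain ⟨w, hw, rfl⟩ := List.mem_map.1 hy
  rw [List.mem_range'_1] at hw
  refine sub_mem (one_mem _) (of_mem_fixingAlgebra ?_)
  refine fixingSubgroup_antitone _ _ (fun x hx => ?_) (windowCycle_mem_fixingSubgroup a w)
  simp only [Set.mem_ofPred_eq] at hx ⊢
  omega

lemma cycleProd_mul_windowCycle {w : ℕ} (hw : s + l ≤ w) (h : a + w ≤ n) :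
    cycleProd k n a s l * ⌜windowCycle n a w⌝ =
      ⌜windowCycle n a w⌝ * cycleProd k n (a + 1) s l := by
  induction l with
  | zero => simp
  | succ l ih =>
    have hcomm : (1 - ⌜windowCycle n a (s + l)⌝) * ⌜windowCycle n a w⌝ =
        ⌜windowCycle n a w⌝ * (1 - ⌜windowCycle n (a + 1) (s + l)⌝) := by
      rw [sub_mul, mul_sub, one_mul, mul_one, ← map_mul, ← map_mul,
        windowCycle_mul_windowCycle_succ (by omega) h]
    rw [cycleProd_succ, cycleProd_succ, mul_assoc, hcomm, ← mul_assoc, ih (by omega),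
      mul_assoc]

lemma one_sub_windowCycle_mul_one_sub_blockRotate (h : b + m + 2 ≤ n) :
    (1 - ⌜windowCycle n b (m + 2)⌝) * (1 - ⌜blockRotate n b (m + 2)⌝) =
      (1 - ⌜blockRotate n b (m + 1)⌝) * (1 - ⌜windowCycle n 0 (b + m + 2)⌝) -
        ⌜windowCycle n b (m + 2)⌝ *
          ((1 - ⌜windowCycle n 0 (b + 1)⌝) * (1 - ⌜blockRotate n (b + 1) (m + 1)⌝)) := by
  have e₁ := congrArg (of k (Perm (Fin n))) (windowCycle_mul_blockRotate h)
  have e₂ := congrArg (of k (Perm (Fin n))) (windowCycle_mul_blockRotate_succ h)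
  have e₃ := congrArg (of k (Perm (Fin n))) (windowCycle_mul_windowCycle_zero h)
  have e₄ := congrArg (of k (Perm (Fin n))) (windowCycle_zero_mul_blockRotate_succ h)
  simp only [map_mul] at e₁ e₂ e₃ e₄
  simp only [mul_sub, sub_mul, one_mul, mul_one, ← mul_assoc, e₁, e₂, e₃, e₄]
  abel

theorem exists_cycleProd_mul_one_sub_blockRotate (m : ℕ) :
    ∀ b, 1 ≤ b → b + m + 1 ≤ n → ∃ x ∈ fixingAlgebra k {i : Fin n | (i : ℕ) < b},
      cycleProd k n b 2 m * (1 - ⌜blockRotate n b (m + 1)⌝) =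
        x * cycleProd k n 0 (b + 1) (m + 1) := by
  induction m with
  | zero =>
    intro b _ h
    refine ⟨1, one_mem _, ?_⟩
    simp only [cycleProd_zero, blockRotate_one (by omega : b + 1 ≤ n), cycleProd_succ, add_zero,
      one_mul]
  | succ m ih =>
    intro b hb h
    obtain ⟨x₁, hx₁, e₁⟩ := ih b hb (by omega)
    obtain ⟨x₂, hx₂, e₂⟩ := ih (b + 1) (by omega) (by omega)
    have hC : ∀ y ∈ fixingAlgebra k {i : Fin n | (i : ℕ) < b + 1},
        Commute (1 - ⌜windowCycle n 0 (b + 1)⌝) y :=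
      fun y hy => (Commute.one_left y).sub_left
        (commute_of_mem_fixingAlgebra (fun x hx => windowCycle_apply_of_le (not_lt.1 hx)) hy)
    have hW : cycleProd k n (b + 1) 2 m ∈ fixingAlgebra k {i : Fin n | (i : ℕ) < b + 1} :=
      fixingAlgebra_anti (fun x hx => Or.inl hx) cycleProd_mem_fixingAlgebra
    have hA : ⌜windowCycle n b (m + 2)⌝ ∈ fixingAlgebra k {i : Fin n | (i : ℕ) < b} :=
      of_mem_fixingAlgebra (fixingSubgroup_antitone _ _ (fun x hx => Or.inl hx)
        (windowCycle_mem_fixingSubgroup b (m + 2)))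
    have hx₂' : x₂ ∈ fixingAlgebra k {i : Fin n | (i : ℕ) < b} :=
      fixingAlgebra_anti (fun (x : Fin n) (hx : (x : ℕ) < b) => show (x : ℕ) < b + 1 by omega)
        hx₂
    refine ⟨x₁ - ⌜windowCycle n b (m + 2)⌝ * x₂, sub_mem hx₁ (mul_mem hA hx₂'), ?_⟩
    have hD : cycleProd k n 0 (b + 1) (m + 2) =
        cycleProd k n 0 (b + 1) (m + 1) * (1 - ⌜windowCycle n 0 (b + m + 2)⌝) := by
      rw [cycleProd_succ, show b + 1 + (m + 1) = b + m + 2 by omega]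
    calc cycleProd k n b 2 (m + 1) * (1 - ⌜blockRotate n b (m + 2)⌝)
        = cycleProd k n b 2 m *
            ((1 - ⌜windowCycle n b (m + 2)⌝) * (1 - ⌜blockRotate n b (m + 2)⌝)) := by
          rw [cycleProd_succ, mul_assoc, add_comm 2 m]
      _ = cycleProd k n b 2 m * (1 - ⌜blockRotate n b (m + 1)⌝) *
            (1 - ⌜windowCycle n 0 (b + m + 2)⌝) -
          cycleProd k n b 2 m * ⌜windowCycle n b (m + 2)⌝ *
            ((1 - ⌜windowCycle n 0 (b + 1)⌝) * (1 - ⌜blockRotate n (b + 1) (m + 1)⌝)) := by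
          rw [one_sub_windowCycle_mul_one_sub_blockRotate (by omega), mul_sub, mul_assoc,
            mul_assoc]
      _ = x₁ * cycleProd k n 0 (b + 1) (m + 2) - ⌜windowCycle n b (m + 2)⌝ *
            ((1 - ⌜windowCycle n 0 (b + 1)⌝) *
              (cycleProd k n (b + 1) 2 m * (1 - ⌜blockRotate n (b + 1) (m + 1)⌝))) := by
          rw [e₁, cycleProd_mul_windowCycle (by omega) (by omega), hD, ← mul_assoc (1 - _),
            (hC _ hW).eq]
          simp only [mul_assoc]
      _ = (x₁ - ⌜windowCycle n b (m + 2)⌝ * x₂) * cycleProd k n 0 (b + 1) (m + 2) := by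
          rw [e₂, ← mul_assoc (1 - _), (hC _ hx₂).eq, cycleProd_succ' (s := b + 1)]
          simp only [sub_mul, mul_assoc]

lemma exists_cycleProd_eq_neg {m : ℕ} (h : m + 2 ≤ n) :
    ∃ x ∈ fixingAlgebra k {i : Fin n | (i : ℕ) < 1},
      cycleProd k n 0 2 (m + 1) =
        -(⌜windowCycle n 0 (m + 2)⌝ * x * cycleProd k n 0 2 (m + 1)) := by
  obtain ⟨x, hx, e⟩ :=
    exists_cycleProd_mul_one_sub_blockRotate (k := k) (n := n) m 1 le_rfl (by omega)
  refine ⟨x, hx, ?_⟩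
  have hρ : ⌜windowCycle n 0 (m + 2)⌝ * ⌜blockRotate n 1 (m + 1)⌝ = 1 := by
    rw [← map_mul, windowCycle_zero_mul_blockRotate_one h, map_one]
  calc cycleProd k n 0 2 (m + 1)
      = -(cycleProd k n 0 2 m * ⌜windowCycle n 0 (m + 2)⌝ *
          (1 - ⌜blockRotate n 1 (m + 1)⌝)) := by
        rw [cycleProd_succ, add_comm 2 m, mul_assoc, mul_sub (⌜_⌝), hρ, mul_one, ← mul_neg,
          neg_sub]
    _ = -(⌜windowCycle n 0 (m + 2)⌝ * x * cycleProd k n 0 2 (m + 1)) := by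
        rw [cycleProd_mul_windowCycle (a := 0) (w := m + 2) (by omega) (by omega), mul_assoc, e,
          mul_assoc]

lemma coeff_cycleProd_of_apply_zero [NeZero n] (m : ℕ) (h : m + 1 ≤ n) {g : Perm (Fin n)}
    (hg : g 0 = 0) :
    (cycleProd k n 0 2 m).coeff g = (1 : MonoidAlgebra k (Perm (Fin n))).coeff g := by
  induction m with
  | zero => rfl
  | succ m ih =>
    have hd : windowCycle n 0 (m + 2) 0 = ⟨m + 1, by omega⟩ :=
      Fin.ext (val_windowCycle_apply_zero h)
    have hmoved : g * (windowCycle n 0 (m + 2))⁻¹ ∉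
        fixingSubgroup (Perm (Fin n)) {x : Fin n | (x : ℕ) < 0 ∨ 0 + 2 + m ≤ x + 1} := by
      intro hmem
      have := (mem_fixingSubgroup_iff _).1 hmem ⟨m + 1, by omega⟩
        (Or.inr (show 0 + 2 + m ≤ m + 1 + 1 by omega))
      rw [Perm.smul_def, Perm.mul_apply, Perm.inv_eq_iff_eq.2 hd.symm, hg] at this
      exact absurd (congrArg Fin.val this) (by simp)
    rw [cycleProd_succ, add_comm 2 m, mul_sub, mul_one, coeff_sub, Finsupp.sub_apply,
      ih (by omega), of_apply, coeff_mul_single_apply,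
      coeff_eq_zero_of_mem_fixingAlgebra cycleProd_mem_fixingAlgebra hmoved, zero_mul, sub_zero]

end CycleProducts

section DynkinSpechtWeverElement

variable {F : Type*} [Field F] {n : ℕ}

lemma dsw_eq_cycleProd : dsw F n = cycleProd F n 0 2 (n - 1) := by
  rw [dsw, dswPartial, cycleProd, List.take_of_length_le (by simp)]
  congr 1
  refine List.ext_getElem (by simp) fun l h₁ h₂ => ?_
  simp [inv_cycleRange, add_comm 2 l]

lemma dsw_mem_translateSpan [NeZero n] (j : Fin n) : dsw F n ∈ translateSpan (dsw F n) 0 j := by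
  obtain ⟨_ | m, hj⟩ := j
  · exact subset_span ⟨1, rfl, by simp only [map_one, one_mul]⟩
  obtain ⟨x, hx, e⟩ := exists_cycleProd_eq_neg (k := F) (show m + 2 ≤ n by omega)
  have hdsw : dsw F n = -(of F (Perm (Fin n)) (windowCycle n 0 (m + 2)) * x * dsw F n) := by
    rw [dsw_eq_cycleProd, show n - 1 = (m + 1) + (n - 1 - (m + 1)) by omega, cycleProd_add]
    conv_lhs => rw [e]
    simp only [neg_mul, mul_assoc]
  have hd : windowCycle n 0 (m + 2) 0 = ⟨m + 1, hj⟩ := Fin.ext (val_windowCycle_apply_zero hj)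
  have hx₀ : x ∈ fixingAlgebra F {(0 : Fin n)} :=
    fixingAlgebra_anti (t := {i : Fin n | (i : ℕ) < 1}) (by simp) hx
  have := neg_mem (of_mul_mul_mem_translateSpan (ω := dsw F n) (windowCycle n 0 (m + 2)) hx₀)
  rwa [← hdsw, hd] at this

lemma coeff_dsw_of_apply_zero [NeZero n] {g : Perm (Fin n)} (hg : g 0 = 0) :
    (dsw F n).coeff g = (1 : MonoidAlgebra F (Perm (Fin n))).coeff g := by
  rw [dsw_eq_cycleProd]
  exact coeff_cycleProd_of_apply_zero _ (by have := NeZero.pos n; omega) hg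

end DynkinSpechtWeverElement

end DynkinSpechtWever

open DynkinSpechtWever in
theorem dsw_basis_general (F : Type*) [Field F] (n : ℕ) (i : Fin n) :
    LinearIndependent F
      (fun π : MulAction.stabilizer (Equiv.Perm (Fin n)) i =>
        MonoidAlgebra.of F (Equiv.Perm (Fin n)) (π : Equiv.Perm (Fin n)) *
          MonoidAlgebra.of F (Equiv.Perm (Fin n)) (Fin.cycleRange i)⁻¹ * dsw F n) ∧
    Submodule.span F
      (Set.range (fun π : MulAction.stabilizer (Equiv.Perm (Fin n)) i =>
        MonoidAlgebra.of F (Equiv.Perm (Fin n)) (π : Equiv.Perm (Fin n)) *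
          MonoidAlgebra.of F (Equiv.Perm (Fin n)) (Fin.cycleRange i)⁻¹ * dsw F n)) =
      (Submodule.span (MonoidAlgebra F (Equiv.Perm (Fin n))) {dsw F n}).restrictScalars F ∧
    Module.finrank F
      ↥((Submodule.span (MonoidAlgebra F (Equiv.Perm (Fin n))) {dsw F n}).restrictScalars F) =
      Nat.factorial (n - 1) := by
  have : NeZero n := NeZero.of_pos i.pos
  have hc : (Fin.cycleRange i)⁻¹ 0 = i := Fin.cycleRange_symm_zero i
  have hindep := linearIndependent_stabilizer_mul hc fun _ hg => coeff_dsw_of_apply_zero (F := F) hg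
  have hspan := (span_range_stabilizer_mul (ω := dsw F n) hc).trans
    (restrictScalars_span_singleton_eq_translateSpan dsw_mem_translateSpan i).symm
  refine ⟨hindep, hspan, ?_⟩
  rw [← hspan, finrank_span_eq_card hindep, Fintype.card_eq_nat_card, Perm.natCard_stabilizer,
    Nat.card_fin]

/-- For every `n ≥ 2` and every field `F`, the set `{π·c_n·ω_n : π ∈ 𝔖_{n−1}}` is an
`F`-basis of the left ideal `F𝔖_n·ω_n`; in particular `dim_F(Lie_F(n)) = (n−1)!`.
Here `𝔖_{n-1} ≤ 𝔖_n` is the stabilizer of the last point `i` (the point with value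
`n-1` in zero-based indexing), and `c_n` is the backward cycle `(n, n-1, …, 2, 1)`. -/
theorem dsw_basis (F : Type*) [Field F] (n : ℕ) (hn : 2 ≤ n) (i : Fin n)
    (hi : (i : ℕ) = n - 1) :
    LinearIndependent F
      (fun π : MulAction.stabilizer (Equiv.Perm (Fin n)) i =>
        MonoidAlgebra.of F (Equiv.Perm (Fin n)) (π : Equiv.Perm (Fin n)) *
          MonoidAlgebra.of F (Equiv.Perm (Fin n)) (Fin.cycleRange i)⁻¹ * dsw F n) ∧
    Submodule.span F
      (Set.range (fun π : MulAction.stabilizer (Equiv.Perm (Fin n)) i =>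
        MonoidAlgebra.of F (Equiv.Perm (Fin n)) (π : Equiv.Perm (Fin n)) *
          MonoidAlgebra.of F (Equiv.Perm (Fin n)) (Fin.cycleRange i)⁻¹ * dsw F n)) =
      (Submodule.span (MonoidAlgebra F (Equiv.Perm (Fin n))) {dsw F n}).restrictScalars F ∧
    Module.finrank F
      ↥((Submodule.span (MonoidAlgebra F (Equiv.Perm (Fin n))) {dsw F n}).restrictScalars F) =
      Nat.factorial (n - 1) :=
  dsw_basis_general F n i
end

section
/- Let F be a field, V an F-vector space, and r ≥ 1. For all v_1, …, v_r ∈ V, the left-normed Lie bracket satisfies [[v_1, v_2, …, v_r] = (v_1 ⊗ ⋯ ⊗ v_r) * ω_r, where ω_r = (1−c_2)(1−c_3)⋯(1−c_r) ∈ F𝔖_r acts on V^{⊗r} by place permutations (and ω_1 = 1). -/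
/-- The left-normed Lie bracket `[[v_1,v_2,…,v_r] = [⋯[[v_1,v_2],v_3],…,v_r]` in the
tensor algebra of `V`, where `[x,y] = x⊗y − y⊗x` (equal to `v_1` for `r = 1`). -/
noncomputable def leftNormedBracket (F : Type*) [Field F] (V : Type*) [AddCommGroup V]
    [Module F V] : (r : ℕ) → (Fin r → V) → TensorAlgebra F V
  | 0, _ => 0
  | 1, v => TensorAlgebra.ι F (v 0)
  | (r + 2), v =>
      leftNormedBracket F V (r + 1) (fun i => v i.castSucc) *
          TensorAlgebra.ι F (v (Fin.last (r + 1))) -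
        TensorAlgebra.ι F (v (Fin.last (r + 1))) *
          leftNormedBracket F V (r + 1) (fun i => v i.castSucc)

/-- The pure tensor `v_1 ⊗ ⋯ ⊗ v_r` in the tensor algebra of `V`. -/
noncomputable def pureTensor (F : Type*) [Field F] (V : Type*) [AddCommGroup V] [Module F V]
    (r : ℕ) (v : Fin r → V) : TensorAlgebra F V :=
  ((List.finRange r).map (fun i => TensorAlgebra.ι F (v i))).prod

open Equiv Equiv.Perm MonoidAlgebra

section

variable (F : Type*) [Field F] (V : Type*) [AddCommGroup V] [Module F V]

lemma pureTensor_zero (v : Fin 0 → V) : pureTensor F V 0 v = 1 := rfl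

lemma pureTensor_succ {n : ℕ} (v : Fin (n + 1) → V) :
    pureTensor F V (n + 1) v = TensorAlgebra.ι F (v 0) * pureTensor F V n (fun i => v i.succ) := by
  simp only [pureTensor, ← List.ofFn_eq_map, List.ofFn_succ, List.prod_cons]

lemma pureTensor_succ' {n : ℕ} (v : Fin (n + 1) → V) :
    pureTensor F V (n + 1) v =
      pureTensor F V n (fun i => v i.castSucc) * TensorAlgebra.ι F (v (Fin.last n)) := by
  simp only [pureTensor, ← List.ofFn_eq_map, List.ofFn_succ', List.prod_concat]

noncomputable def permCastSucc (n : ℕ) : Perm (Fin n) →* Perm (Fin (n + 1)) :=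
  viaEmbeddingHom Fin.castSuccEmb

lemma permCastSucc_apply_castSucc {n : ℕ} (σ : Perm (Fin n)) (i : Fin n) :
    permCastSucc n σ i.castSucc = (σ i).castSucc :=
  viaEmbedding_apply σ Fin.castSuccEmb i

lemma permCastSucc_apply_last {n : ℕ} (σ : Perm (Fin n)) :
    permCastSucc n σ (Fin.last n) = Fin.last n :=
  viaEmbedding_apply_of_notMem σ Fin.castSuccEmb _ (by simp [Fin.range_castSucc])

lemma permCastSucc_cycleRange {n : ℕ} (j : Fin n) :
    permCastSucc n (Fin.cycleRange j) = Fin.cycleRange j.castSucc := by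
  ext i
  rcases Fin.eq_castSucc_or_eq_last i with ⟨k, rfl⟩ | rfl
  · rw [permCastSucc_apply_castSucc]
    rcases le_or_gt k j with h | h
    · rw [Fin.val_castSucc, Fin.coe_cycleRange_of_le h,
        Fin.coe_cycleRange_of_le (Fin.castSucc_le_castSucc_iff.mpr h)]
      simp
    · rw [Fin.cycleRange_of_gt h, Fin.cycleRange_of_gt (Fin.castSucc_lt_castSucc_iff.mpr h)]
  · rw [permCastSucc_apply_last, Fin.cycleRange_of_gt (Fin.castSucc_lt_last j)]

lemma pureTensor_comp_permCastSucc {n : ℕ} (v : Fin (n + 1) → V) (σ : Perm (Fin n)) :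
    pureTensor F V (n + 1) (v ∘ permCastSucc n σ) =
      pureTensor F V n ((v ∘ Fin.castSucc) ∘ σ) * TensorAlgebra.ι F (v (Fin.last n)) := by
  simp [pureTensor_succ', permCastSucc_apply_castSucc, permCastSucc_apply_last, Function.comp_def]

lemma pureTensor_comp_permCastSucc_mul_cycleRange_last_inv {n : ℕ} (v : Fin (n + 1) → V)
    (σ : Perm (Fin n)) :
    pureTensor F V (n + 1) (v ∘ ⇑(permCastSucc n σ * (Fin.cycleRange (Fin.last n))⁻¹)) =
      TensorAlgebra.ι F (v (Fin.last n)) * pureTensor F V n ((v ∘ Fin.castSucc) ∘ σ) := by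
  simp only [pureTensor_succ, Perm.coe_mul, Function.comp_apply, Perm.inv_def,
    Fin.cycleRange_symm_zero, Fin.cycleRange_symm_succ, Fin.succAbove_last,
    permCastSucc_apply_castSucc, permCastSucc_apply_last]
  rfl

/-- `placeAction F V v x` is `(v_1 ⊗ ⋯ ⊗ v_n) * x`, where `x ∈ F𝔖_n` acts by place
permutations. -/
noncomputable def placeAction {n : ℕ} (v : Fin n → V) :
    MonoidAlgebra F (Perm (Fin n)) →ₗ[F] TensorAlgebra F V :=
  Finsupp.linearCombination F (fun σ : Perm (Fin n) => pureTensor F V n (v ∘ σ)) ∘ₗ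
    (coeffLinearEquiv F).toLinearMap

lemma placeAction_apply {n : ℕ} (v : Fin n → V) (x : MonoidAlgebra F (Perm (Fin n))) :
    placeAction F V v x = x.coeff.sum fun σ c => c • pureTensor F V n (fun i => v (σ i)) :=
  rfl

lemma placeAction_single {n : ℕ} (v : Fin n → V) (σ : Perm (Fin n)) (c : F) :
    placeAction F V v (single σ c) = c • pureTensor F V n (v ∘ σ) := by
  simp [placeAction]

lemma placeAction_one {n : ℕ} (v : Fin n → V) : placeAction F V v 1 = pureTensor F V n v := by
  rw [MonoidAlgebra.one_def, placeAction_single, one_smul]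
  rfl

lemma placeAction_mapDomainAlgHom_permCastSucc {n : ℕ} (v : Fin (n + 1) → V)
    (x : MonoidAlgebra F (Perm (Fin n))) :
    placeAction F V v (mapDomainAlgHom F F (permCastSucc n) x) =
      placeAction F V (v ∘ Fin.castSucc) x * TensorAlgebra.ι F (v (Fin.last n)) := by
  induction x using MonoidAlgebra.induction_linear with
  | zero => simp
  | add x y hx hy => simp only [map_add, hx, hy, add_mul]
  | single σ c =>
    rw [mapDomainAlgHom_apply, mapDomain_single, placeAction_single, placeAction_single,
      pureTensor_comp_permCastSucc, smul_mul_assoc]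

lemma placeAction_mapDomainAlgHom_permCastSucc_mul_of_cycleRange_last_inv {n : ℕ}
    (v : Fin (n + 1) → V) (x : MonoidAlgebra F (Perm (Fin n))) :
    placeAction F V v (mapDomainAlgHom F F (permCastSucc n) x *
        of F _ (Fin.cycleRange (Fin.last n))⁻¹) =
      TensorAlgebra.ι F (v (Fin.last n)) * placeAction F V (v ∘ Fin.castSucc) x := by
  induction x using MonoidAlgebra.induction_linear with
  | zero => simp
  | add x y hx hy => simp only [map_add, add_mul, hx, hy, mul_add]
  | single σ c =>
    rw [mapDomainAlgHom_apply, mapDomain_single, of_apply, single_mul_single, mul_one,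
      placeAction_single, placeAction_single, pureTensor_comp_permCastSucc_mul_cycleRange_last_inv,
      mul_smul_comm]

lemma dsw_succ_eq_prod (n : ℕ) :
    dsw F (n + 1) =
      (List.ofFn fun j : Fin n => 1 - of F _ (Fin.cycleRange j.succ)⁻¹).prod := by
  rw [dsw, dswPartial, List.take_of_length_le (by simp), List.finRange_succ, List.tail_cons,
    List.map_map, ← List.ofFn_eq_map]
  rfl

lemma dsw_one : dsw F 1 = 1 := by
  simp [dsw_succ_eq_prod]

lemma dsw_succ_succ (n : ℕ) :
    dsw F (n + 2) = mapDomainAlgHom F F (permCastSucc (n + 1)) (dsw F (n + 1)) *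
      (1 - of F _ (Fin.cycleRange (Fin.last (n + 1)))⁻¹) := by
  rw [dsw_succ_eq_prod, dsw_succ_eq_prod, List.ofFn_succ', List.prod_concat, map_list_prod,
    List.map_ofFn, Fin.succ_last]
  congr 1
  refine congrArg (List.prod ∘ List.ofFn) (funext fun j => ?_)
  rw [Function.comp_apply, map_sub, map_one, of_apply, of_apply, mapDomainAlgHom_apply,
    mapDomain_single, map_inv, permCastSucc_cycleRange, Fin.succ_castSucc]

theorem leftNormedBracket_eq_placeAction_dsw (n : ℕ) (v : Fin (n + 1) → V) :
    leftNormedBracket F V (n + 1) v = placeAction F V v (dsw F (n + 1)) := by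
  induction n with
  | zero =>
    rw [dsw_one, placeAction_one, pureTensor_succ, pureTensor_zero, mul_one]
    rfl
  | succ n ih =>
    rw [leftNormedBracket, dsw_succ_succ, mul_sub, mul_one, map_sub,
      placeAction_mapDomainAlgHom_permCastSucc,
      placeAction_mapDomainAlgHom_permCastSucc_mul_of_cycleRange_last_inv, ← ih]
    rfl

end

/-- For a field `F`, an `F`-vector space `V` and `r ≥ 1`, the left-normed Lie bracket
satisfies `[[v_1, v_2, …, v_r] = (v_1 ⊗ ⋯ ⊗ v_r) * ω_r`, where
`ω_r = (1−c_2)(1−c_3)⋯(1−c_r) ∈ F𝔖_r` acts on `V^{⊗r}` by place permutations: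
`(v_1 ⊗ ⋯ ⊗ v_r) * σ = v_{σ(1)} ⊗ ⋯ ⊗ v_{σ(r)}`, extended `F`-linearly to `F𝔖_r`. -/
theorem leftNormedBracket_eq_dsw_action (F : Type*) [Field F] (V : Type*) [AddCommGroup V]
    [Module F V] (r : ℕ) (hr : 1 ≤ r) (v : Fin r → V) :
    leftNormedBracket F V r v =
      Finsupp.sum (dsw F r).coeff (fun σ c => c • pureTensor F V r (fun i => v (σ i))) := by
  obtain ⟨n, rfl⟩ := Nat.exists_eq_add_of_le' hr
  rw [← placeAction_apply]
  exact leftNormedBracket_eq_placeAction_dsw F V n v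
end

section
/- Let A be a finite-dimensional algebra over a field F with a symmetric, associative, non-degenerate F-bilinear form, let ι : A → A be an involutory F-algebra anti-automorphism, and let ω ∈ A. Then Hom_F(Aω, F)^ι ≅ Aω^ι as left A-modules, where Hom_F(Aω,F)^ι denotes the right A-module Hom_F(Aω,F) turned into a left A-module via a·f := f·a^ι. -/
/-!
Let `N = Aω`. Via the form, `u ↦ ⟨u | ·⟩|_N` maps `A` onto `Hom_F(N, F)`, and by symmetry
and associativity `⟨u | bω⟩ = ⟨b | ωu⟩`, so its kernel is the right annihilator of `ω`.
The map `u ↦ ι(ωu)` maps `A` onto `A ι(ω)` with the same kernel. The induced isomorphism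
sends `f·ι(a)`, represented by `u ι(a)`, to `ι(ω u ι(a)) = a ι(ωu)`.
-/

/-- Left multiplication by `a ∈ A` on a left ideal `N` of `A`, as an `F`-linear
endomorphism of `N`. For `f ∈ Hom_F(N, F)`, the right `A`-action is
`(f·a)(x) = f(ax)`, i.e. `f·a = f ∘ₗ leftMulOn F N a`; the left `A`-action twisted by an
anti-automorphism `ι` is `a·f = f·ι(a) = f ∘ₗ leftMulOn F N (ι a)`. -/
def leftMulOn (F : Type*) [CommSemiring F] {A : Type*} [Ring A] [Algebra F A]
    (N : Submodule A A) (a : A) :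
    ↥(N.restrictScalars F) →ₗ[F] ↥(N.restrictScalars F) where
  toFun x := ⟨a * (x : A), by simpa [smul_eq_mul] using N.smul_mem a x.2⟩
  map_add' x y := by ext; simp [mul_add]
  map_smul' c x := by ext; simp [Algebra.mul_smul_comm]

open Submodule LinearMap

theorem LinearMap.exists_linearEquiv_apply_eq_of_ker_eq {R M P Q : Type*} [Ring R]
    [AddCommGroup M] [Module R M] [AddCommGroup P] [Module R P] [AddCommGroup Q] [Module R Q]
    {f : M →ₗ[R] P} {g : M →ₗ[R] Q} (hf : Function.Surjective f)
    (hg : Function.Surjective g) (h : ker f = ker g) :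
    ∃ e : P ≃ₗ[R] Q, ∀ m, e (f m) = g m :=
  ⟨(f.quotKerEquivOfSurjective hf).symm ≪≫ₗ quotEquivOfEq _ _ h ≪≫ₗ
      g.quotKerEquivOfSurjective hg,
    fun m => by
      have hm : (f.quotKerEquivOfSurjective hf).symm (f m) = Submodule.Quotient.mk m :=
        (LinearEquiv.symm_apply_eq _).mpr rfl
      rw [LinearEquiv.trans_apply, LinearEquiv.trans_apply, hm]
      rfl⟩

theorem LinearMap.SeparatingLeft.surjective {K V : Type*} [Field K] [AddCommGroup V]
    [Module K V] [FiniteDimensional K V] {B : V →ₗ[K] V →ₗ[K] K} (hB : B.SeparatingLeft) :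
    Function.Surjective B :=
  (injective_iff_surjective_of_finrank_eq_finrank Subspace.dual_finrank_eq.symm).mp
    (ker_eq_bot.mp (separatingLeft_iff_ker_eq_bot.mp hB))

theorem mem_span_singleton_apply_iff_exists_apply_mul {A : Type*} [Semiring A] {ι : A → A}
    (hanti : ∀ a b : A, ι (a * b) = ι b * ι a) (hinv : ∀ a : A, ι (ι a) = a) {ω y : A} :
    y ∈ span A {ι ω} ↔ ∃ u, ι (ω * u) = y := by
  rw [mem_span_singleton]
  constructor
  · rintro ⟨c, rfl⟩
    exact ⟨ι c, by rw [hanti, hinv, smul_eq_mul]⟩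
  · rintro ⟨u, rfl⟩
    exact ⟨ι u, by rw [hanti, smul_eq_mul]⟩

section

variable {F A : Type*} [CommRing F] [Ring A] [Algebra F A]

theorem ker_dualRestrict_comp_eq_ker_mulLeft {B : A →ₗ[F] A →ₗ[F] F}
    (hsymm : ∀ a b : A, B a b = B b a) (hassoc : ∀ a b c : A, B (a * b) c = B a (b * c))
    (hB : B.SeparatingLeft) (ω : A) :
    ker (((span A {ω}).restrictScalars F).dualRestrict ∘ₗ B) = ker (mulLeft F ω) := by
  have hmove : ∀ u b : A, B u (b * ω) = B (ω * u) b := fun u b => by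
    rw [hsymm, hassoc, hsymm]
  ext u
  simp only [mem_ker, mulLeft_apply]
  constructor
  · intro hu
    refine hB _ fun b => ?_
    rw [← hmove]
    exact LinearMap.congr_fun hu ⟨b * ω, smul_mem _ b (mem_span_singleton_self ω)⟩
  · intro hu
    ext ⟨x, hx⟩
    obtain ⟨b, rfl⟩ := mem_span_singleton.mp hx
    simp [smul_eq_mul, hmove, hu]

theorem dualRestrict_comp_leftMulOn {B : A →ₗ[F] A →ₗ[F] F}
    (hassoc : ∀ a b c : A, B (a * b) c = B a (b * c)) (N : Submodule A A) (u a : A) :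
    (N.restrictScalars F).dualRestrict (B u) ∘ₗ leftMulOn F N a =
      (N.restrictScalars F).dualRestrict (B (u * a)) := by
  ext x
  exact (hassoc u a x).symm

end

/-- Let `A` be a finite-dimensional algebra over a field `F` with a symmetric,
associative, non-degenerate `F`-bilinear form `B`, let `ι : A → A` be an involutory
`F`-algebra anti-automorphism, and let `ω ∈ A`. Then `Hom_F(Aω, F)^ι ≅ Aω^ι` as left
`A`-modules, where `Hom_F(Aω,F)^ι` carries the left action `a·f := f·ι(a)` and
`Aω^ι = span_A {ι ω}` is the left ideal generated by `ω^ι = ι(ω)`. -/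
theorem symmetric_algebra_twisted_dual (F : Type*) [Field F] (A : Type*) [Ring A]
    [Algebra F A] [FiniteDimensional F A] (B : A →ₗ[F] A →ₗ[F] F)
    (hsymm : ∀ a b : A, B a b = B b a)
    (hassoc : ∀ a b c : A, B (a * b) c = B a (b * c))
    (hnondeg : ∀ a : A, (∀ b : A, B a b = 0) → a = 0)
    (ι : A →ₗ[F] A) (hanti : ∀ a b : A, ι (a * b) = ι b * ι a) (hinv : ∀ a : A, ι (ι a) = a)
    (ω : A) :
    ∃ e : Module.Dual F ↥((Submodule.span A {ω}).restrictScalars F) ≃ₗ[F]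
        ↥((Submodule.span A {ι ω}).restrictScalars F),
      ∀ (f : Module.Dual F ↥((Submodule.span A {ω}).restrictScalars F)) (a : A),
        (e (f ∘ₗ leftMulOn F (Submodule.span A {ω}) (ι a)) : A) = a * (e f : A) := by
  let g := ((span A {ω}).restrictScalars F).dualRestrict ∘ₗ B
  let χ : A →ₗ[F] (span A {ι ω}).restrictScalars F := (ι ∘ₗ mulLeft F ω).codRestrict _
    fun u => (mem_span_singleton_apply_iff_exists_apply_mul hanti hinv).mpr ⟨u, rfl⟩
  have hg : Function.Surjective g :=
    Subspace.dualRestrict_surjective.comp (SeparatingLeft.surjective hnondeg)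
  have hχ : Function.Surjective χ := fun ⟨y, hy⟩ => by
    obtain ⟨u, rfl⟩ := (mem_span_singleton_apply_iff_exists_apply_mul hanti hinv).mp hy
    exact ⟨u, rfl⟩
  have hι : ker ι = ⊥ := ker_eq_bot.mpr fun a b h => by rw [← hinv a, h, hinv]
  have hker : ker g = ker χ :=
    (ker_dualRestrict_comp_eq_ker_mulLeft hsymm hassoc hnondeg ω).trans
      ((ker_comp_of_ker_eq_bot _ hι).symm.trans (ker_codRestrict _ _ _).symm)
  obtain ⟨e, he⟩ := exists_linearEquiv_apply_eq_of_ker_eq hg hχ hker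
  refine ⟨e, fun f a => ?_⟩
  obtain ⟨u, rfl⟩ := hg f
  have hgu : g u ∘ₗ leftMulOn F (span A {ω}) (ι a) = g (u * ι a) :=
    dualRestrict_comp_leftMulOn hassoc _ u _
  rw [hgu, he, he]
  change ι (ω * (u * ι a)) = a * ι (ω * u)
  rw [← mul_assoc, hanti, hinv]
end

section
/- Let k ≥ 2 and p ≥ 2 be integers, and let x_0, x_1, x_2, … be real numbers with 0 ≤ x_t ≤ 1 for all t, satisfying the recursion x_t = 1 − Σ_{i=1}^{t} (k·p^{t−i})^{−(p^i − 1)} · (x_{t−i})^{p^i} for every t ≥ 0. Then x_t > 0 for all t ≥ 0. (In particular, Σ_{i=1}^{t} (k·p^{t−i})^{−(p^i − 1)} ≤ Σ_{i=1}^{t} k^{−(p^i−1)} < (k−1)^{−1} ≤ 1.) -/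
/-!
Since `1 ≤ p` and `i ≤ p ^ i - 1`, the coefficients of the recursion are bounded by
`k ^ (-(p ^ i - 1)) ≤ k ^ (-i)`, so they sum to less than the geometric series `1 / (k - 1) ≤ 1`.
As `0 ≤ x ≤ 1`, the subtracted sum is at most the sum of the coefficients, hence `x t > 0`.
-/

open Finset

lemma sum_Icc_inv_pow_lt {a : ℝ} (ha : 1 < a) (t : ℕ) :
    ∑ i ∈ Icc 1 t, (a ^ i)⁻¹ < (a - 1)⁻¹ := by
  have hr : a⁻¹ < 1 := inv_lt_one_of_one_lt₀ ha
  calc ∑ i ∈ Icc 1 t, (a ^ i)⁻¹ = (a⁻¹ ^ 1 - a⁻¹ ^ (t + 1)) / (1 - a⁻¹) := by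
        simp_rw [← Ico_add_one_right_eq_Icc, ← inv_pow]
        exact geom_sum_Ico' hr.ne (by omega)
    _ < a⁻¹ / (1 - a⁻¹) := by
        gcongr
        rw [pow_one, sub_lt_self_iff]
        exact pow_pos (inv_pos.2 (by linarith)) _
    _ = (a - 1)⁻¹ := by field_simp

lemma sum_Icc_inv_pow_pow_sub_one_lt {a : ℝ} (ha : 1 < a) {p : ℕ} (hp : 2 ≤ p) (t : ℕ) :
    ∑ i ∈ Icc 1 t, (a ^ (p ^ i - 1))⁻¹ < (a - 1)⁻¹ := by
  refine lt_of_le_of_lt (sum_le_sum fun i _ => ?_) (sum_Icc_inv_pow_lt ha t)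
  have hi : i ≤ p ^ i - 1 := Nat.le_sub_one_of_lt (Nat.lt_pow_self (by omega))
  exact inv_anti₀ (by positivity) (pow_le_pow_right₀ ha.le hi)

lemma sum_Icc_inv_mul_pow_le {a b : ℝ} (ha : 0 < a) (hb : 1 ≤ b) (e : ℕ → ℕ) (t : ℕ) :
    ∑ i ∈ Icc 1 t, ((a * b ^ (t - i)) ^ e i)⁻¹ ≤ ∑ i ∈ Icc 1 t, (a ^ e i)⁻¹ := by
  refine sum_le_sum fun i _ => inv_anti₀ (by positivity) (pow_le_pow_left₀ ha.le ?_ _)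
  exact le_mul_of_one_le_right ha.le (one_le_pow₀ hb)

lemma sum_mul_pow_le_sum {ι : Type*} (s : Finset ι) {c y : ι → ℝ} (n : ι → ℕ)
    (hc : ∀ i ∈ s, 0 ≤ c i) (hy0 : ∀ i ∈ s, 0 ≤ y i) (hy1 : ∀ i ∈ s, y i ≤ 1) :
    ∑ i ∈ s, c i * y i ^ n i ≤ ∑ i ∈ s, c i :=
  sum_le_sum fun i hi => mul_le_of_le_one_right (hc i hi) (pow_le_one₀ (hy0 i hi) (hy1 i hi))

/-- Let `k ≥ 2` and `p ≥ 2` be integers, and let `x_0, x_1, x_2, …` be real numbers with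
`0 ≤ x_t ≤ 1` for all `t`, satisfying the recursion
`x_t = 1 − Σ_{i=1}^{t} (k·p^{t−i})^{−(p^i − 1)} · (x_{t−i})^{p^i}` for every `t ≥ 0`.
Then `x_t > 0` for all `t ≥ 0`. (In particular,
`Σ_{i=1}^{t} (k·p^{t−i})^{−(p^i − 1)} ≤ Σ_{i=1}^{t} k^{−(p^i−1)} < (k−1)^{−1} ≤ 1`.) -/
theorem lie_module_recursion_pos (k p : ℕ) (hk : 2 ≤ k) (hp : 2 ≤ p) (x : ℕ → ℝ)
    (hx0 : ∀ t, 0 ≤ x t) (hx1 : ∀ t, x t ≤ 1)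
    (hrec : ∀ t, x t = 1 - ∑ i ∈ Finset.Icc 1 t,
      (((k : ℝ) * (p : ℝ) ^ (t - i)) ^ (p ^ i - 1))⁻¹ * (x (t - i)) ^ (p ^ i)) :
    (∀ t, 0 < x t) ∧
    (∀ t, ∑ i ∈ Finset.Icc 1 t, (((k : ℝ) * (p : ℝ) ^ (t - i)) ^ (p ^ i - 1))⁻¹ ≤
      ∑ i ∈ Finset.Icc 1 t, (((k : ℝ)) ^ (p ^ i - 1))⁻¹) ∧
    (∀ t, ∑ i ∈ Finset.Icc 1 t, (((k : ℝ)) ^ (p ^ i - 1))⁻¹ < ((k : ℝ) - 1)⁻¹) ∧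
    ((k : ℝ) - 1)⁻¹ ≤ 1 := by
  have hk2 : (2 : ℝ) ≤ k := by exact_mod_cast hk
  have hcoef : ∀ t, ∑ i ∈ Icc 1 t, (((k : ℝ) * (p : ℝ) ^ (t - i)) ^ (p ^ i - 1))⁻¹ ≤
      ∑ i ∈ Icc 1 t, (((k : ℝ)) ^ (p ^ i - 1))⁻¹ :=
    sum_Icc_inv_mul_pow_le (by linarith) (by exact_mod_cast (by omega : 1 ≤ p)) _
  have hgeom : ∀ t, ∑ i ∈ Icc 1 t, (((k : ℝ)) ^ (p ^ i - 1))⁻¹ < ((k : ℝ) - 1)⁻¹ :=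
    sum_Icc_inv_pow_pow_sub_one_lt (by linarith) hp
  have hinv : ((k : ℝ) - 1)⁻¹ ≤ 1 := inv_le_one_of_one_le₀ (by linarith)
  refine ⟨fun t => ?_, hcoef, hgeom, hinv⟩
  have hterms := sum_mul_pow_le_sum (Icc 1 t)
    (c := fun i => (((k : ℝ) * (p : ℝ) ^ (t - i)) ^ (p ^ i - 1))⁻¹) (fun i => p ^ i)
    (fun i _ => by positivity) (fun i _ => hx0 (t - i)) (fun i _ => hx1 (t - i))
  linarith [hrec t, hcoef t, hgeom t]
end

section
/- Let F be an algebraically closed field of characteristic 2. Then the Lie module Lie_F(4) = F𝔖_4·ω_4 is an indecomposable, non-projective F𝔖_4-module of dimension 6. -/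
/-- A module is indecomposable if it is non-zero and admits no non-trivial direct sum
decomposition into submodules. -/
def IsIndecomposableModule (R M : Type*) [Ring R] [AddCommGroup M] [Module R M] : Prop :=
  Nontrivial M ∧ ∀ U V : Submodule R M, IsCompl U V → U = ⊥ ∨ V = ⊥

/-!
Over a field `F` of characteristic `2`, `ω₄ = (1 + c₂)(1 + c₃)(1 + c₄)` is a sum of eight
permutations, and every identity needed in `F𝔖₄` is an identity in `𝔽₂𝔖₄`; these are checked by
`decide` on formal sums of permutations, encoded as lists read modulo `2`. The six translates
`σ ω₄` with `σ(0) = 0` form an `F`-basis of `Lie(4)`.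

Since `ω₄² = 0` while the coefficient of `1` in `ω₄` is `1`, `Lie(4)` is not projective: a
splitting of `a ↦ a ω₄` would give `y` with `y ω₄ = ω₄` and `ω₄ y = 0`, which the trace
`x ↦ x.coeff 1` of `F𝔖₄` cannot tell apart.

An endomorphism `φ` of `Lie(4)` is determined by `φ ω₄`, which is killed by everything that
kills `ω₄`, in particular by `1 + (0 1)` and `1 + (1 2) + (0 1 2)`. Solving these linear
conditions in the basis above gives `φ ω₄ = (α + β b) ω₄` for an element `b` with `b² ω₄ = 0`,
so `φ² = φ` forces `β = 0` and `α ∈ {0, 1}`: `Lie(4)` has no idempotent endomorphisms besides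
`0` and `1`, hence is indecomposable.
-/

open Submodule in
theorem IsIndecomposableModule.of_isIdempotentElem {R M : Type*} [Ring R] [AddCommGroup M]
    [Module R M] [Nontrivial M]
    (h : ∀ φ : Module.End R M, IsIdempotentElem φ → φ = 0 ∨ φ = 1) :
    IsIndecomposableModule R M := by
  refine ⟨‹_›, fun U V hUV =>
    (h _ (isIdempotentElem_projection hUV)).imp (fun h0 => ?_) fun h1 => ?_⟩
  · rw [← range_projection hUV, h0, LinearMap.range_zero]
  · rw [← ker_projection hUV, h1, Module.End.one_eq_id, LinearMap.ker_id]

namespace Submodule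

variable {R M : Type*} [Ring R] [AddCommGroup M] [Module R M]

def toSpanSingleton (x : M) : R →ₗ[R] R ∙ x :=
  (LinearMap.toSpanSingleton R M x).codRestrict _ fun r => smul_mem _ r (mem_span_singleton_self x)

theorem toSpanSingleton_one (x : M) :
    toSpanSingleton (R := R) x 1 = ⟨x, mem_span_singleton_self x⟩ :=
  Subtype.ext (one_smul R x)

theorem toSpanSingleton_surjective (x : M) : Function.Surjective (toSpanSingleton (R := R) x) :=
  fun ⟨_, hm⟩ => (mem_span_singleton.mp hm).imp fun _ h => Subtype.ext h

theorem linearMap_ext_spanSingleton {N : Type*} [AddCommGroup N] [Module R N] {x : M}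
    {f g : (R ∙ x) →ₗ[R] N}
    (h : f ⟨x, mem_span_singleton_self x⟩ = g ⟨x, mem_span_singleton_self x⟩) :
    f = g :=
  (LinearMap.cancel_right (toSpanSingleton_surjective x)).mp <| LinearMap.ext_ring <| by
    simpa only [LinearMap.comp_apply, toSpanSingleton_one] using h

end Submodule

theorem exists_mul_eq_self_of_projective_span_singleton {A : Type*} [Ring A] (x : A)
    [Module.Projective A (A ∙ x)] : ∃ y : A, y * x = x ∧ ∀ a : A, a * x = 0 → a * y = 0 := by
  obtain ⟨s, hs⟩ := Module.projective_lifting_property (Submodule.toSpanSingleton (R := A) x)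
    LinearMap.id (Submodule.toSpanSingleton_surjective x)
  set x' : A ∙ x := ⟨x, Submodule.mem_span_singleton_self x⟩
  refine ⟨s x', congrArg Subtype.val (LinearMap.congr_fun hs x'), fun a ha => ?_⟩
  have : a • x' = 0 := Subtype.ext ha
  rw [← smul_eq_mul, ← map_smul, this, map_zero]

namespace MonoidAlgebra

variable {k G : Type*} [CommSemiring k] [Group G]

theorem coeff_one_mul_comm (x y : MonoidAlgebra k G) : (x * y).coeff 1 = (y * x).coeff 1 := by
  induction x using MonoidAlgebra.induction_linear with
  | zero => simp
  | add x₁ x₂ h₁ h₂ => simp [add_mul, mul_add, h₁, h₂]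
  | single g r => simp [mul_comm]

/-- With `tr = coeff 1`, the element `y` of `exists_mul_eq_self_of_projective_span_singleton`
would give `tr x = tr (y x) = tr (x y) = 0`. -/
theorem not_projective_span_singleton {k G : Type*} [CommRing k] [Group G]
    (x : MonoidAlgebra k G) (hx : x * x = 0) (htr : x.coeff 1 ≠ 0) :
    ¬ Module.Projective (MonoidAlgebra k G) (MonoidAlgebra k G ∙ x) := fun _ => by
  obtain ⟨y, hyx, hann⟩ := exists_mul_eq_self_of_projective_span_singleton x
  apply htr
  rw [← hyx, coeff_one_mul_comm, hann x hx, coeff_zero, Finsupp.coe_zero, Pi.zero_apply]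

end MonoidAlgebra

namespace List

variable {M : Type*} [DecidableEq M]

def CountModEq (p : ℕ) (l₁ l₂ : List M) : Prop :=
  ∀ m, l₁.count m ≡ l₂.count m [MOD p]

instance [Fintype M] (p : ℕ) (l₁ l₂ : List M) : Decidable (CountModEq p l₁ l₂) :=
  Fintype.decidableForallFintype

end List

namespace MonoidAlgebra

variable {R M : Type*}

def listMul [Mul M] (l₁ l₂ : List M) : List M :=
  l₁.flatMap fun m => l₂.map (m * ·)

section Semiring

variable (R) [Semiring R] [Monoid M]

noncomputable def ofList (l : List M) : MonoidAlgebra R M :=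
  (l.map (of R M)).sum

variable {R}

@[simp]
theorem ofList_nil : ofList R ([] : List M) = 0 := rfl

@[simp]
theorem ofList_cons (m : M) (l : List M) : ofList R (m :: l) = of R M m + ofList R l :=
  List.sum_cons

theorem ofList_append (l₁ l₂ : List M) : ofList R (l₁ ++ l₂) = ofList R l₁ + ofList R l₂ := by
  simp [ofList]

theorem ofList_flatMap {ι : Type*} (l : List ι) (f : ι → List M) :
    ofList R (l.flatMap f) = (l.map fun i => ofList R (f i)).sum := by
  induction l with
  | nil => simp
  | cons a l ih => rw [List.flatMap_cons, ofList_append, ih, List.map_cons, List.sum_cons]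

theorem of_mul_ofList (m : M) (l : List M) :
    of R M m * ofList R l = ofList R (l.map (m * ·)) := by
  induction l with
  | nil => simp
  | cons a l ih => rw [ofList_cons, mul_add, ih, ← map_mul, List.map_cons, ofList_cons]

theorem ofList_mul (l₁ l₂ : List M) : ofList R l₁ * ofList R l₂ = ofList R (listMul l₁ l₂) := by
  induction l₁ with
  | nil => simp [listMul]
  | cons a l ih =>
    rw [ofList_cons, add_mul, ih, of_mul_ofList, listMul, listMul, List.flatMap_cons,
      ofList_append]

theorem coeff_ofList [DecidableEq M] (l : List M) (m : M) : (ofList R l).coeff m = l.count m := by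
  induction l with
  | nil => simp
  | cons a l ih =>
    rw [ofList_cons, coeff_add, Finsupp.add_apply, ih, of_apply, coeff_single, Finsupp.single_apply,
      List.count_cons]
    split_ifs <;> simp_all [add_comm]

end Semiring

theorem ofList_eq_of_countModEq [Semiring R] [Monoid M] [DecidableEq M] (p : ℕ) [CharP R p]
    {l₁ l₂ : List M} (h : l₁.CountModEq p l₂) : ofList R l₁ = ofList R l₂ :=
  MonoidAlgebra.ext <| Finsupp.ext fun m => by
    simp only [coeff_ofList, CharP.natCast_eq_natCast' R p (h m)]

end MonoidAlgebra

local notation "𝔖₄" => Equiv.Perm (Fin 4)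

namespace Lie4

open MonoidAlgebra Equiv

def omegaList : List 𝔖₄ :=
  listMul [1, (Fin.cycleRange 1)⁻¹] (listMul [1, (Fin.cycleRange 2)⁻¹] [1, (Fin.cycleRange 3)⁻¹])

/-- The permutations fixing `0`. -/
def sym3 : Fin 6 → 𝔖₄ :=
  ![1, swap 2 3, swap 1 2, swap 1 2 * swap 2 3, swap 2 3 * swap 1 2, swap 1 3]

def basisList (j : Fin 6) : List 𝔖₄ :=
  listMul [sym3 j] omegaList

def annList₁ : List 𝔖₄ := [1, swap 0 1]

def annList₂ : List 𝔖₄ := [1, swap 1 2, Fin.cycleRange 2]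

def nilList : List 𝔖₄ := [sym3 2, sym3 3, sym3 4, sym3 5]

set_option maxRecDepth 10000 in
theorem omegaList_mul_self : (listMul omegaList omegaList).CountModEq 2 [] := by
  decide

theorem count_sym3_basisList (i j : Fin 6) :
    (basisList j).count (sym3 i) = if i = j then 1 else 0 := by
  revert i j
  decide

/-- The coordinates of `g ω₄` in the basis `basisList` are its coefficients at the `sym3 j`. -/
theorem translate_omegaList (g : 𝔖₄) :
    (listMul [g] omegaList).CountModEq 2 (((List.finRange 6).filter fun j =>
      (listMul [g] omegaList).count (sym3 j) % 2 = 1).flatMap basisList) := by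
  revert g
  decide

theorem annList₁_mul_omegaList : (listMul annList₁ omegaList).CountModEq 2 [] := by
  decide

theorem annList₂_mul_omegaList : (listMul annList₂ omegaList).CountModEq 2 [] := by
  decide

theorem nilList_mul_self_mul_omegaList :
    (listMul (listMul nilList nilList) omegaList).CountModEq 2 [] := by
  decide

theorem count_annList_mul_basisList (j : Fin 6) :
    (listMul annList₁ (basisList j)).count (sym3 0) ≡ ![0, 0, 1, 1, 0, 0] j [MOD 2] ∧
    (listMul annList₁ (basisList j)).count (sym3 1) ≡ ![0, 0, 0, 0, 1, 1] j [MOD 2] ∧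
    (listMul annList₁ (basisList j)).count (sym3 2) ≡ ![0, 0, 0, 1, 0, 1] j [MOD 2] ∧
    (listMul annList₂ (basisList j)).count 1 ≡ ![0, 1, 0, 0, 0, 0] j [MOD 2] := by
  revert j
  decide

section

variable (F : Type*) [Field F]

local notation "A" => MonoidAlgebra F 𝔖₄

noncomputable def basisVec (j : Fin 6) : A :=
  ofList F (basisList j)

theorem coeff_basisVec (i j : Fin 6) :
    (basisVec F j).coeff (sym3 i) = if i = j then 1 else 0 := by
  rw [basisVec, coeff_ofList, count_sym3_basisList]
  split_ifs <;> simp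

theorem linearIndependent_basisVec : LinearIndependent F (basisVec F) :=
  Fintype.linearIndependent_iff.mpr fun c hc i => by
    simpa [coeff_sum, coeff_basisVec] using congr(($hc).coeff (sym3 i))

theorem coeff_ofList_mul_sum_smul_basisVec (l : List 𝔖₄) (c : Fin 6 → F) (g : 𝔖₄) :
    (ofList F l * ∑ j, c j • basisVec F j).coeff g =
      ∑ j, c j * ((listMul l (basisList j)).count g : F) := by
  simp [Finset.mul_sum, coeff_sum, basisVec, ofList_mul, coeff_ofList]

theorem smul_one_add_smul_ofList_mul (α β : F) (l : List 𝔖₄) (x : A) :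
    (α • 1 + β • ofList F l) * x = α • x + β • (ofList F l * x) := by
  rw [add_mul, smul_mul_assoc, smul_mul_assoc, one_mul]

variable [CharP F 2]

theorem dsw_four_eq : dsw F 4 = ofList F omegaList := by
  have one_sub (g : 𝔖₄) : 1 - of F 𝔖₄ g = ofList F [1, g] := by
    rw [ofList_cons, ofList_cons, ofList_nil, add_zero, map_one, sub_eq_add_neg, of_apply,
      ← single_neg, CharTwo.neg_eq]
  simp only [dsw, dswPartial, show ((List.finRange 4).take 4).tail = [1, 2, 3] by decide,
    List.map_cons, List.map_nil, List.prod_cons, List.prod_nil, mul_one, one_sub, ofList_mul,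
    omegaList]

theorem ofList_mul_dsw_eq_zero {l : List 𝔖₄} (h : (listMul l omegaList).CountModEq 2 []) :
    ofList F l * dsw F 4 = 0 := by
  rw [dsw_four_eq, ofList_mul, ofList_eq_of_countModEq 2 h, ofList_nil]

theorem basisVec_eq (j : Fin 6) : basisVec F j = of F 𝔖₄ (sym3 j) * dsw F 4 := by
  rw [basisVec, basisList, ← ofList_mul, dsw_four_eq, ofList_cons, ofList_nil, add_zero]

theorem dsw_eq_basisVec_zero : dsw F 4 = basisVec F 0 := by
  rw [basisVec_eq, show sym3 0 = 1 from rfl, map_one, one_mul]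

theorem ofList_nilList_mul_dsw :
    ofList F nilList * dsw F 4 = basisVec F 2 + basisVec F 3 + basisVec F 4 + basisVec F 5 := by
  simp only [nilList, ofList_cons, ofList_nil, add_mul, add_zero, basisVec_eq, add_assoc]

theorem of_mul_dsw_mem_span (g : 𝔖₄) :
    of F 𝔖₄ g * dsw F 4 ∈ Submodule.span F (Set.range (basisVec F)) := by
  rw [dsw_four_eq, ← add_zero (of F 𝔖₄ g), ← ofList_nil, ← ofList_cons, ofList_mul,
    ofList_eq_of_countModEq 2 (translate_omegaList g), ofList_flatMap]
  exact list_sum_mem fun x hx => by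
    obtain ⟨j, -, rfl⟩ := List.mem_map.mp hx
    exact Submodule.subset_span ⟨j, rfl⟩

theorem restrictScalars_span_dsw :
    (A ∙ dsw F 4).restrictScalars F = Submodule.span F (Set.range (basisVec F)) := by
  refine le_antisymm (fun x hx => ?_) (Submodule.span_le.mpr ?_)
  · obtain ⟨a, rfl⟩ := Submodule.mem_span_singleton.mp hx
    clear hx
    induction a using MonoidAlgebra.induction_linear with
    | zero => simp
    | add a b ha hb => rw [add_smul]; exact add_mem ha hb
    | single g r =>
      rw [smul_eq_mul, ← mul_one r, ← smul_single', ← of_apply, smul_mul_assoc]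
      exact Submodule.smul_mem _ r (of_mul_dsw_mem_span F g)
  · rintro _ ⟨j, rfl⟩
    rw [basisVec_eq]
    exact Submodule.smul_mem _ _ (Submodule.mem_span_singleton_self _)

theorem finrank_span_dsw : Module.finrank F ((A ∙ dsw F 4).restrictScalars F) = 6 := by
  rw [restrictScalars_span_dsw, finrank_span_eq_card (linearIndependent_basisVec F),
    Fintype.card_fin]

theorem dsw_mul_self : dsw F 4 * dsw F 4 = 0 := by
  nth_rw 1 [dsw_four_eq]
  exact ofList_mul_dsw_eq_zero F omegaList_mul_self

theorem coeff_one_dsw : (dsw F 4).coeff 1 = 1 := by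
  rw [dsw_eq_basisVec_zero]
  exact coeff_basisVec F 0 0

theorem sum_mul_eq_zero_of_ofList_mul_eq_zero {l : List 𝔖₄} {c : Fin 6 → F} (g : 𝔖₄)
    {w : Fin 6 → ℕ} (hw : ∀ j, (listMul l (basisList j)).count g ≡ w j [MOD 2])
    (h : ofList F l * ∑ j, c j • basisVec F j = 0) : ∑ j, c j * (w j : F) = 0 := by
  simpa [coeff_ofList_mul_sum_smul_basisVec, CharP.natCast_eq_natCast' F 2 (hw _)] using
    congr(($h).coeff g)

theorem coords_of_annihilated {c : Fin 6 → F}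
    (h₁ : ofList F annList₁ * ∑ j, c j • basisVec F j = 0)
    (h₂ : ofList F annList₂ * ∑ j, c j • basisVec F j = 0) :
    c 1 = 0 ∧ c 3 = c 2 ∧ c 4 = c 2 ∧ c 5 = c 2 := by
  have e0 : c 2 = c 3 := by
    simpa [Fin.sum_univ_six, CharTwo.add_eq_zero] using sum_mul_eq_zero_of_ofList_mul_eq_zero F
      (sym3 0) (fun j => (count_annList_mul_basisList j).1) h₁
  have e1 : c 4 = c 5 := by
    simpa [Fin.sum_univ_six, CharTwo.add_eq_zero] using sum_mul_eq_zero_of_ofList_mul_eq_zero F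
      (sym3 1) (fun j => (count_annList_mul_basisList j).2.1) h₁
  have e2 : c 3 = c 5 := by
    simpa [Fin.sum_univ_six, CharTwo.add_eq_zero] using sum_mul_eq_zero_of_ofList_mul_eq_zero F
      (sym3 2) (fun j => (count_annList_mul_basisList j).2.2.1) h₁
  have e3 : c 1 = 0 := by
    simpa [Fin.sum_univ_six] using sum_mul_eq_zero_of_ofList_mul_eq_zero F
      1 (fun j => (count_annList_mul_basisList j).2.2.2) h₂
  exact ⟨e3, e0.symm, e1.trans (e0.trans e2).symm, (e0.trans e2).symm⟩

theorem exists_eq_of_annihilated {y : A} (hy : y ∈ A ∙ dsw F 4)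
    (h₁ : ofList F annList₁ * y = 0) (h₂ : ofList F annList₂ * y = 0) :
    ∃ α β : F, y = (α • 1 + β • ofList F nilList) * dsw F 4 := by
  rw [← Submodule.restrictScalars_mem F, restrictScalars_span_dsw,
    Submodule.mem_span_range_iff_exists_fun] at hy
  obtain ⟨c, rfl⟩ := hy
  obtain ⟨hc1, hc3, hc4, hc5⟩ := coords_of_annihilated F h₁ h₂
  refine ⟨c 0, c 2, ?_⟩
  rw [smul_one_add_smul_ofList_mul, Fin.sum_univ_six, ofList_nilList_mul_dsw,
    dsw_eq_basisVec_zero, hc1, hc3, hc4, hc5]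
  module

theorem mul_self_smul_one_add_smul_nilList_mul_dsw (α β : F) :
    (α • 1 + β • ofList F nilList) * ((α • 1 + β • ofList F nilList) * dsw F 4) =
      α ^ 2 • dsw F 4 := by
  have hnil : ofList F nilList * (ofList F nilList * dsw F 4) = 0 := by
    rw [← mul_assoc, ofList_mul, ofList_mul_dsw_eq_zero F nilList_mul_self_mul_omegaList]
  rw [smul_one_add_smul_ofList_mul, smul_one_add_smul_ofList_mul, mul_add, mul_smul_comm,
    mul_smul_comm, hnil, smul_zero, add_zero, smul_add, smul_smul, smul_smul, smul_smul,
    mul_comm β α, add_assoc, ← add_smul, CharTwo.add_self_eq_zero, zero_smul, add_zero, sq]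

theorem exists_apply_eq_smul (φ : Module.End A (A ∙ dsw F 4)) :
    ∃ α β : F, φ ⟨dsw F 4, Submodule.mem_span_singleton_self _⟩ =
      (α • 1 + β • ofList F nilList) • ⟨dsw F 4, Submodule.mem_span_singleton_self _⟩ := by
  set x : A ∙ dsw F 4 := ⟨dsw F 4, Submodule.mem_span_singleton_self _⟩
  have ann (a : A) (ha : a * dsw F 4 = 0) : a * (φ x : A) = 0 := by
    have : a • x = 0 := Subtype.ext ha
    simpa [this] using congr(($(φ.map_smul a x)).val).symm
  obtain ⟨α, β, hy⟩ := exists_eq_of_annihilated F (φ x).2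
    (ann _ (ofList_mul_dsw_eq_zero F annList₁_mul_omegaList))
    (ann _ (ofList_mul_dsw_eq_zero F annList₂_mul_omegaList))
  exact ⟨α, β, Subtype.ext hy⟩

theorem end_eq_zero_or_one_of_isIdempotentElem (φ : Module.End A (A ∙ dsw F 4))
    (hφ : IsIdempotentElem φ) : φ = 0 ∨ φ = 1 := by
  obtain ⟨α, β, hφx⟩ := exists_apply_eq_smul F φ
  have hφφ := LinearMap.congr_fun hφ ⟨dsw F 4, Submodule.mem_span_singleton_self _⟩
  rw [Module.End.mul_apply, hφx, map_smul, hφx] at hφφ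
  have h : α ^ 2 • dsw F 4 = α • dsw F 4 + β • (ofList F nilList * dsw F 4) := by
    rw [← mul_self_smul_one_add_smul_nilList_mul_dsw, ← smul_one_add_smul_ofList_mul]
    exact congr(($hφφ).val)
  rw [ofList_nilList_mul_dsw, dsw_eq_basisVec_zero] at h
  have hα : α * α = α := by simpa [coeff_basisVec, sq] using congr(($h).coeff (sym3 0))
  have hβ : β = 0 := by simpa [coeff_basisVec] using congr(($h).coeff (sym3 2)).symm
  subst hβ
  rcases IsIdempotentElem.iff_eq_zero_or_one.mp hα with rfl | rfl
  · exact .inl <| Submodule.linearMap_ext_spanSingleton <| by simp [hφx]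
  · exact .inr <| Submodule.linearMap_ext_spanSingleton <| by simp [hφx]

end

end Lie4

theorem lie4_indecomposable_not_projective_general (F : Type*) [Field F] [CharP F 2] :
    Module.finrank F
      ↥((Submodule.span (MonoidAlgebra F (Equiv.Perm (Fin 4))) {dsw F 4}).restrictScalars F) = 6 ∧
    IsIndecomposableModule (MonoidAlgebra F (Equiv.Perm (Fin 4)))
      ↥(Submodule.span (MonoidAlgebra F (Equiv.Perm (Fin 4))) {dsw F 4}) ∧
    ¬ Module.Projective (MonoidAlgebra F (Equiv.Perm (Fin 4)))
      ↥(Submodule.span (MonoidAlgebra F (Equiv.Perm (Fin 4))) {dsw F 4}) := by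
  have coeff_one : (dsw F 4).coeff 1 ≠ 0 := by
    rw [Lie4.coeff_one_dsw]
    exact one_ne_zero
  have : Nontrivial (Submodule.span (MonoidAlgebra F (Equiv.Perm (Fin 4))) {dsw F 4}) :=
    Submodule.nontrivial_span_singleton fun h => coeff_one (by simp [h])
  exact ⟨Lie4.finrank_span_dsw F,
    .of_isIdempotentElem (Lie4.end_eq_zero_or_one_of_isIdempotentElem F),
    MonoidAlgebra.not_projective_span_singleton _ (Lie4.dsw_mul_self F) coeff_one⟩

/-- Let `F` be an algebraically closed field of characteristic 2. Then the Lie module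
`Lie_F(4) = F𝔖_4·ω_4` is an indecomposable, non-projective `F𝔖_4`-module of
dimension 6. -/
theorem lie4_indecomposable_not_projective (F : Type*) [Field F] [IsAlgClosed F] [CharP F 2] :
    Module.finrank F
      ↥((Submodule.span (MonoidAlgebra F (Equiv.Perm (Fin 4))) {dsw F 4}).restrictScalars F) = 6 ∧
    IsIndecomposableModule (MonoidAlgebra F (Equiv.Perm (Fin 4)))
      ↥(Submodule.span (MonoidAlgebra F (Equiv.Perm (Fin 4))) {dsw F 4}) ∧
    ¬ Module.Projective (MonoidAlgebra F (Equiv.Perm (Fin 4)))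
      ↥(Submodule.span (MonoidAlgebra F (Equiv.Perm (Fin 4))) {dsw F 4}) :=
  lie4_indecomposable_not_projective_general F
end
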